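/- arXiv:1311.2178 — 11 statements merged into one kernel-verified Lean document; each statement's English description precedes it below -/
import Mathlib

section
/- Let (X, τ, 𝒫) be a compact and tight general space and let R_τ be the specialization preorder of X. Then for every x ∈ X, R_τ(x) = ⋂{A ∈ 𝒫 ∩ τ : x ∈ A}, and for every A ∈ 𝒫, the topological closure of A equals R_τ⁻¹(A). -/
open Set TopologicalSpace

/-!
If `x ∈ closure A` with `A ∈ 𝒫`, then `A` together with the open members of `𝒫` around `x` has the
finite intersection property, so compactness of `𝒫` gives a point `y ∈ A` lying in every open
member of `𝒫` that contains `x`. Since these sets form a basis (tightness), this says exactly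
`x ∈ closure {y}`; the description of `R_τ(x)` is the same basis computation.
-/

namespace TopologicalSpace.IsTopologicalBasis

variable {X : Type*} [TopologicalSpace X] {B : Set (Set X)}

theorem mem_closure_singleton_iff (hB : IsTopologicalBasis B) {x y : X} :
    x ∈ closure {y} ↔ ∀ U ∈ B, x ∈ U → y ∈ U := by
  simp only [hB.mem_closure_iff, inter_singleton_nonempty]

theorem setOf_mem_closure_singleton_eq_sInter (hB : IsTopologicalBasis B) (x : X) :
    {y | x ∈ closure {y}} = ⋂₀ {U | U ∈ B ∧ x ∈ U} := by
  ext y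
  simp only [mem_ofPred_eq, hB.mem_closure_singleton_iff, mem_sInter, and_imp]

end TopologicalSpace.IsTopologicalBasis

theorem exists_mem_forall_isOpen_mem_of_mem_closure {X : Type*} [TopologicalSpace X]
    {P : Set (Set X)}
    (hcompact : ∀ F ⊆ P, (∀ G ⊆ F, G.Finite → (⋂₀ G).Nonempty) → (⋂₀ F).Nonempty)
    {A : Set X} (hA : A ∈ P) {x : X} (hx : x ∈ closure A) :
    ∃ y ∈ A, ∀ U ∈ P, IsOpen U → x ∈ U → y ∈ U := by
  set S : Set (Set X) := {U | U ∈ P ∧ IsOpen U ∧ x ∈ U}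
  have hFIP : ∀ G ⊆ insert A S, G.Finite → (⋂₀ G).Nonempty := by
    intro G hG hGfin
    have hS : ∀ U ∈ G \ {A}, U ∈ S := fun U ⟨hUG, hUA⟩ => (hG hUG).resolve_left hUA
    -- the members of `G` other than `A` form a finite family of open sets around `x`
    obtain ⟨z, hzU, hzA⟩ := mem_closure_iff.1 hx _
      (hGfin.sdiff.isOpen_sInter fun U hU => (hS U hU).2.1) fun U hU => (hS U hU).2.2
    refine ⟨z, sInter_subset_sInter (subset_insert_sdiff_singleton A G) ?_⟩
    rw [sInter_insert]
    exact ⟨hzA, hzU⟩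
  obtain ⟨y, hy⟩ := hcompact (insert A S) (insert_subset hA fun U hU => hU.1) hFIP
  exact ⟨y, hy A (mem_insert _ _), fun U hUP hUo hxU => hy U (mem_insert_of_mem _ ⟨hUP, hUo, hxU⟩)⟩

theorem statement0_general {X : Type*} [TopologicalSpace X] (P : Set (Set X))
    (hcompact : ∀ F ⊆ P, (∀ G ⊆ F, G.Finite → (⋂₀ G).Nonempty) → (⋂₀ F).Nonempty)
    (htight : IsTopologicalBasis {A | A ∈ P ∧ IsOpen A}) :
    (∀ x : X, {y : X | x ∈ closure {y}} = ⋂₀ {A | A ∈ P ∧ IsOpen A ∧ x ∈ A}) ∧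
    (∀ A ∈ P, closure A = {x : X | ∃ y ∈ A, x ∈ closure {y}}) := by
  refine ⟨fun x => by simpa only [mem_ofPred_eq, and_assoc]
    using htight.setOf_mem_closure_singleton_eq_sInter x, fun A hA => ?_⟩
  ext x
  refine ⟨fun hx => ?_, fun ⟨y, hyA, hxy⟩ => closure_mono (singleton_subset_iff.2 hyA) hxy⟩
  obtain ⟨y, hyA, hy⟩ := exists_mem_forall_isOpen_mem_of_mem_closure hcompact hA hx
  exact ⟨y, hyA, htight.mem_closure_singleton_iff.2 fun U ⟨hUP, hUo⟩ => hy U hUP hUo⟩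

/-- Let `(X, τ, 𝒫)` be a compact and tight general space and let `R_τ` be the
specialization preorder of `X` (`x R_τ y` iff `x ∈ closure {y}`). Then for every `x ∈ X`,
`R_τ(x) = ⋂ {A ∈ 𝒫 ∩ τ : x ∈ A}`, and for every `A ∈ 𝒫` the topological closure of `A`
equals `R_τ⁻¹(A)`. -/
theorem statement0 {X : Type*} [TopologicalSpace X] (P : Set (Set X))
    (hempty : (∅ : Set X) ∈ P) (huniv : (univ : Set X) ∈ P)
    (hunion : ∀ A ∈ P, ∀ B ∈ P, A ∪ B ∈ P)
    (hcompl : ∀ A ∈ P, Aᶜ ∈ P)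
    (hclosure : ∀ A ∈ P, closure A ∈ P)
    (hcompact : ∀ F ⊆ P, (∀ G ⊆ F, G.Finite → (⋂₀ G).Nonempty) → (⋂₀ F).Nonempty)
    (htight : IsTopologicalBasis {A | A ∈ P ∧ IsOpen A}) :
    (∀ x : X, {y : X | x ∈ closure {y}} = ⋂₀ {A | A ∈ P ∧ IsOpen A ∧ x ∈ A}) ∧
    (∀ A ∈ P, closure A = {x : X | ∃ y ∈ A, x ∈ closure {y}}) :=
  statement0_general P hcompact htight
end

section
/- Let (X, τ, 𝒫) be a compact and tight general space and let R_τ be the specialization preorder of X. Then 𝒫 is closed under the operation A ↦ R_τ⁻¹(A), and the triple (X, R_τ, 𝒫) is a tight general S4-frame: whenever x ∉ closure {y}, there exists A ∈ 𝒫 with y ∈ A and x ∉ R_τ⁻¹(A). -/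
open Set TopologicalSpace

/-! If `w ∈ closure A` with `A ∈ 𝒫`, the family made of `A` and of the open members of `𝒫`
around `w` has the finite intersection property, so by compactness some `v ∈ A` lies in every
basic neighbourhood of `w`, i.e. `w ∈ closure {v}`. Hence `R_τ⁻¹(A) = closure A ∈ 𝒫`.
For tightness, separate `x` from the closed set `closure {y}` by a basic open `B`; then `Bᶜ` is
closed, so `R_τ⁻¹(Bᶜ) ⊆ Bᶜ` misses `x`. -/

section

variable {X : Type*} [TopologicalSpace X]

theorem setOf_exists_mem_closure_singleton_subset_closure (A : Set X) :
    {w : X | ∃ v ∈ A, w ∈ closure {v}} ⊆ closure A := by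
  rintro w ⟨v, hv, hw⟩
  exact closure_mono (singleton_subset_iff.2 hv) hw

theorem sInter_nonempty_of_subset_insert_of_mem_closure {A : Set X} {w : X} (hw : w ∈ closure A)
    {𝒩 : Set (Set X)} (h𝒩 : ∀ U ∈ 𝒩, IsOpen U ∧ w ∈ U) {G : Set (Set X)}
    (hG : G ⊆ insert A 𝒩) (hGfin : G.Finite) : (⋂₀ G).Nonempty := by
  have hG' : G ⊆ insert A (G ∩ 𝒩) := fun U hU ↦ (hG hU).imp id fun hU' ↦ ⟨hU, hU'⟩
  have hopen : IsOpen (⋂₀ (G ∩ 𝒩)) :=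
    (hGfin.inter_of_left 𝒩).isOpen_sInter fun U hU ↦ (h𝒩 U hU.2).1
  have hmem : w ∈ ⋂₀ (G ∩ 𝒩) := fun U hU ↦ (h𝒩 U hU.2).2
  obtain ⟨v, hv⟩ := mem_closure_iff.1 hw _ hopen hmem
  refine ⟨v, sInter_subset_sInter hG' ?_⟩
  rw [sInter_insert]
  exact ⟨hv.2, hv.1⟩

theorem setOf_exists_mem_closure_singleton_eq_closure {P : Set (Set X)}
    (hcompact : ∀ F ⊆ P, (∀ G ⊆ F, G.Finite → (⋂₀ G).Nonempty) → (⋂₀ F).Nonempty)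
    (htight : IsTopologicalBasis {A | A ∈ P ∧ IsOpen A}) {A : Set X} (hA : A ∈ P) :
    {w : X | ∃ v ∈ A, w ∈ closure {v}} = closure A := by
  refine (setOf_exists_mem_closure_singleton_subset_closure A).antisymm fun w hw ↦ ?_
  set 𝒩 : Set (Set X) := {U | U ∈ P ∧ IsOpen U ∧ w ∈ U}
  have hFP : insert A 𝒩 ⊆ P := insert_subset hA fun U hU ↦ hU.1
  obtain ⟨v, hv⟩ := hcompact _ hFP fun G hG hGfin ↦
    sInter_nonempty_of_subset_insert_of_mem_closure hw (fun U hU ↦ hU.2) hG hGfin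
  refine ⟨v, hv A (mem_insert _ _), htight.mem_closure_iff.2 fun U hU hwU ↦ ?_⟩
  exact ⟨v, hv U (mem_insert_of_mem _ ⟨hU.1, hU.2, hwU⟩), rfl⟩

end

theorem statement1_general {X : Type*} [TopologicalSpace X] (P : Set (Set X))
    (hcompl : ∀ A ∈ P, Aᶜ ∈ P)
    (hclosure : ∀ A ∈ P, closure A ∈ P)
    (hcompact : ∀ F ⊆ P, (∀ G ⊆ F, G.Finite → (⋂₀ G).Nonempty) → (⋂₀ F).Nonempty)
    (htight : IsTopologicalBasis {A | A ∈ P ∧ IsOpen A}) :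
    (∀ A ∈ P, {w : X | ∃ v ∈ A, w ∈ closure {v}} ∈ P) ∧
    (∀ x y : X, x ∉ closure {y} →
      ∃ A ∈ P, y ∈ A ∧ x ∉ {w : X | ∃ v ∈ A, w ∈ closure {v}}) := by
  refine ⟨fun A hA ↦ ?_, fun x y hxy ↦ ?_⟩
  · rw [setOf_exists_mem_closure_singleton_eq_closure hcompact htight hA]
    exact hclosure A hA
  · obtain ⟨B, ⟨hBP, hBopen⟩, hxB, hBsub⟩ :=
      htight.exists_subset_of_mem_open hxy isClosed_closure.isOpen_compl
    refine ⟨Bᶜ, hcompl B hBP, fun hyB ↦ hBsub hyB (subset_closure rfl), fun hx ↦ ?_⟩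
    have hx' := setOf_exists_mem_closure_singleton_subset_closure Bᶜ hx
    rw [hBopen.isClosed_compl.closure_eq] at hx'
    exact hx' hxB

/-- Let `(X, τ, 𝒫)` be a compact and tight general space and let `R_τ` be the
specialization preorder of `X` (`x R_τ y` iff `x ∈ closure {y}`). Then `𝒫` is closed under the
operation `A ↦ R_τ⁻¹(A)`, and `(X, R_τ, 𝒫)` is a tight general S4-frame: whenever
`x ∉ closure {y}` there is `A ∈ 𝒫` with `y ∈ A` and `x ∉ R_τ⁻¹(A)`. -/
theorem statement1 {X : Type*} [TopologicalSpace X] (P : Set (Set X))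
    (hempty : (∅ : Set X) ∈ P) (huniv : (univ : Set X) ∈ P)
    (hunion : ∀ A ∈ P, ∀ B ∈ P, A ∪ B ∈ P)
    (hcompl : ∀ A ∈ P, Aᶜ ∈ P)
    (hclosure : ∀ A ∈ P, closure A ∈ P)
    (hcompact : ∀ F ⊆ P, (∀ G ⊆ F, G.Finite → (⋂₀ G).Nonempty) → (⋂₀ F).Nonempty)
    (htight : IsTopologicalBasis {A | A ∈ P ∧ IsOpen A}) :
    (∀ A ∈ P, {w : X | ∃ v ∈ A, w ∈ closure {v}} ∈ P) ∧
    (∀ x y : X, x ∉ closure {y} →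
      ∃ A ∈ P, y ∈ A ∧ x ∉ {w : X | ∃ v ∈ A, w ∈ closure {v}}) :=
  statement1_general P hcompl hclosure hcompact htight
end

section
/- Let (W, R, 𝒫) be a compact and tight general S4-frame, let 𝒫_R = {A ∈ 𝒫 : A is an R-upset}, and let τ_R be the topology on W generated by the basis 𝒫_R. Then for all x, y ∈ W, x R y if and only if x lies in the τ_R-closure of {y}; and for every A ∈ 𝒫, R⁻¹(A) equals the τ_R-closure of A. -/
open Set TopologicalSpace

/-- Let `(W, R, 𝒫)` be a compact and tight general S4-frame, let
`𝒫_R = {A ∈ 𝒫 : A is an R-upset}` and let `τ_R` be the topology generated by the basis `𝒫_R`.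
Then `x R y` iff `x` lies in the `τ_R`-closure of `{y}`, and for every `A ∈ 𝒫`,
`R⁻¹(A)` equals the `τ_R`-closure of `A`. -/
theorem statement2 {W : Type*} (R : W → W → Prop)
    (hrefl : ∀ w, R w w) (htrans : ∀ u v w, R u v → R v w → R u w)
    (P : Set (Set W))
    (hempty : (∅ : Set W) ∈ P) (huniv : (univ : Set W) ∈ P)
    (hunion : ∀ A ∈ P, ∀ B ∈ P, A ∪ B ∈ P)
    (hcompl : ∀ A ∈ P, Aᶜ ∈ P)
    (hRinv : ∀ A ∈ P, {w : W | ∃ v ∈ A, R w v} ∈ P)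
    (hcompact : ∀ F ⊆ P, (∀ G ⊆ F, G.Finite → (⋂₀ G).Nonempty) → (⋂₀ F).Nonempty)
    (htight : ∀ w v : W, ¬ R w v → ∃ A ∈ P, v ∈ A ∧ w ∉ {x : W | ∃ u ∈ A, R x u}) :
    (∀ x y : W, R x y ↔
      x ∈ @closure W (generateFrom {A | A ∈ P ∧ ∀ w ∈ A, ∀ v, R w v → v ∈ A}) {y}) ∧
    (∀ A ∈ P, {w : W | ∃ v ∈ A, R w v} =
      @closure W (generateFrom {A | A ∈ P ∧ ∀ w ∈ A, ∀ v, R w v → v ∈ A}) A) := by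
  classical
  set B : Set (Set W) := {A | A ∈ P ∧ ∀ w ∈ A, ∀ v, R w v → v ∈ A} with hBdef
  letI t : TopologicalSpace W := generateFrom B
  -- every open set is an R-upset
  have hopen_up : ∀ U : Set W, GenerateOpen B U → ∀ w ∈ U, ∀ v, R w v → v ∈ U := by
    intro U hU
    induction hU with
    | basic s hs => exact hs.2
    | univ => intro w _ v _; trivial
    | inter s u _ _ ihs ihu =>
        intro w hw v hwv; exact ⟨ihs w hw.1 v hwv, ihu w hw.2 v hwv⟩
    | sUnion S _ ih =>
        rintro w ⟨s, hsS, hws⟩ v hwv; exact ⟨s, hsS, ih s hsS w hws v hwv⟩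
  have hclos : ∀ (S : Set W) (x : W),
      x ∈ @closure W t S ↔ ∀ U : Set W, GenerateOpen B U → x ∈ U → (U ∩ S).Nonempty := by
    intro S x
    exact mem_closure_iff
  -- complements of R-preimages of members of P are basic opens
  have hbasic : ∀ A ∈ P, ({w : W | ∃ u ∈ A, R w u}ᶜ) ∈ B := by
    intro A hA
    refine ⟨hcompl _ (hRinv _ hA), ?_⟩
    intro w hw v hwv hv
    obtain ⟨u, huA, hvu⟩ := hv
    exact hw ⟨u, huA, htrans _ _ _ hwv hvu⟩
  constructor
  · intro x y
    constructor
    · intro hxy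
      rw [hclos]
      intro U hU hxU
      exact ⟨y, hopen_up U hU x hxU y hxy, rfl⟩
    · intro hx
      by_contra hxy
      obtain ⟨A, hA, hyA, hxnot⟩ := htight x y hxy
      rw [hclos] at hx
      obtain ⟨z, hz1, hz2⟩ := hx _ (GenerateOpen.basic _ (hbasic A hA)) hxnot
      rw [mem_singleton_iff] at hz2
      subst hz2
      exact hz1 ⟨z, hyA, hrefl z⟩
  · intro A hA
    ext x
    rw [hclos]
    constructor
    · rintro ⟨v, hvA, hxv⟩ U hU hxU
      exact ⟨v, hopen_up U hU x hxU v hxv, hvA⟩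
    · intro hx
      by_contra hnot
      have hnr : ∀ v ∈ A, ¬ R x v := by
        intro v hv hr; exact hnot ⟨v, hv, hr⟩
      choose f hfP hfmem hfnot using fun v (hv : v ∈ A) => htight x v (hnr v hv)
      set F : Set (Set W) := insert A
        {C | ∃ v, ∃ hv : v ∈ A, C = {w : W | ∃ u ∈ f v hv, R w u}ᶜ} with hFdef
      have hFP : F ⊆ P := by
        rintro C (rfl | ⟨v, hv, rfl⟩)
        · exact hA
        · exact hcompl _ (hRinv _ (hfP v hv))
      have hFempty : ⋂₀ F = ∅ := by
        ext z
        simp only [mem_empty_iff_false, iff_false]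
        intro hz
        have hzA : z ∈ A := hz A (mem_insert _ _)
        have hzc : z ∈ {w : W | ∃ u ∈ f z hzA, R w u}ᶜ :=
          hz _ (mem_insert_of_mem _ ⟨z, hzA, rfl⟩)
        exact hzc ⟨z, hfmem z hzA, hrefl z⟩
      have : ¬ (∀ G ⊆ F, G.Finite → (⋂₀ G).Nonempty) := by
        intro h
        have := hcompact F hFP h
        rw [hFempty] at this
        exact this.ne_empty rfl
      push_neg at this
      obtain ⟨G, hGF, hGfin, hGempty⟩ := this
      -- G must contain A, and x is in every other member of G
      set G' : Set (Set W) := G \ {A} with hG'def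
      have hxG' : x ∈ ⋂₀ G' := by
        rintro C ⟨hCG, hCA⟩
        rcases hGF hCG with rfl | ⟨v, hv, rfl⟩
        · exact absurd rfl hCA
        · exact hfnot v hv
      have hG'open : GenerateOpen B (⋂₀ G') := by
        have hfin : G'.Finite := hGfin.subset (diff_subset)
        refine hfin.isOpen_sInter ?_
        rintro C ⟨hCG, hCA⟩
        rcases hGF hCG with rfl | ⟨v, hv, rfl⟩
        · exact absurd rfl hCA
        · exact GenerateOpen.basic _ (hbasic _ (hfP v hv))
      obtain ⟨z, hz1, hz2⟩ := hx _ hG'open hxG'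
      -- z ∈ ⋂₀ G' ∩ A ⊆ ⋂₀ G = ∅
      have hzG : z ∈ ⋂₀ G := by
        intro C hCG
        by_cases hCA : C = A
        · subst hCA; exact hz2
        · exact hz1 C ⟨hCG, hCA⟩
      rw [hGempty] at hzG
      exact hzG
end

section
/- Let (X, τ, 𝒫) be a compact and tight general space and let R_τ be the specialization preorder of X. Then the topology on X generated by the family {A ∈ 𝒫 : A is an R_τ-upset} (the sets A ∈ 𝒫 such that x ∈ A and x R_τ y imply y ∈ A) is equal to τ. -/
/-!
Since `x R_τ y` means `y ⤳ x`, the `R_τ`-upsets are the sets stable under generalization.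
Open sets are always stable under generalization, and the open members of `𝒫` form a basis, so
the generated topology is coarser than `τ`. Conversely let `A ∈ 𝒫` be stable under generalization
and `x ∈ A`. If no basic neighbourhood of `x` lay inside `A`, the family consisting of `Aᶜ` and
the basic neighbourhoods of `x` would have the finite intersection property, and compactness would
give a point `z ∉ A` lying in every neighbourhood of `x`, i.e. a generalization `z ⤳ x` outside `A`.
-/

open Set TopologicalSpace

namespace TopologicalSpace.IsTopologicalBasis

variable {X : Type*} [TopologicalSpace X] {ℬ : Set (Set X)}

theorem specializes_of_forall_mem (hℬ : IsTopologicalBasis ℬ) {x z : X}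
    (h : ∀ B ∈ ℬ, x ∈ B → z ∈ B) : z ⤳ x := by
  refine specializes_iff_forall_open.2 fun U hU hxU => ?_
  obtain ⟨B, hB, hxB, hBU⟩ := hℬ.exists_subset_of_mem_open hxU hU
  exact hBU (h B hB hxB)

theorem sInter_nonempty_of_subset_insert_compl (hℬ : IsTopologicalBasis ℬ) {A : Set X} {x : X}
    (hA : ∀ B ∈ ℬ, x ∈ B → ¬B ⊆ A) {G : Set (Set X)}
    (hG : G ⊆ insert Aᶜ {B | B ∈ ℬ ∧ x ∈ B}) (hGfin : G.Finite) : (⋂₀ G).Nonempty := by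
  have hG' : G \ {Aᶜ} ⊆ {B | B ∈ ℬ ∧ x ∈ B} := sdiff_singleton_subset_iff.2 hG
  have hopen : IsOpen (⋂₀ (G \ {Aᶜ})) :=
    hGfin.sdiff.isOpen_sInter fun U hU => hℬ.isOpen (hG' hU).1
  have hx : x ∈ ⋂₀ (G \ {Aᶜ}) := fun U hU => (hG' hU).2
  obtain ⟨B, hB, hxB, hBG⟩ := hℬ.exists_subset_of_mem_open hx hopen
  obtain ⟨z, hzB, hzA⟩ := not_subset.1 (hA B hB hxB)
  refine ⟨z, sInter_subset_sInter (subset_insert_sdiff_singleton Aᶜ G) ?_⟩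
  rw [sInter_insert]
  exact ⟨hzA, hBG hzB⟩

theorem isOpen_of_stableUnderGeneralization (hℬ : IsTopologicalBasis ℬ) {P : Set (Set X)}
    (hℬP : ℬ ⊆ P)
    (hcompact : ∀ F ⊆ P, (∀ G ⊆ F, G.Finite → (⋂₀ G).Nonempty) → (⋂₀ F).Nonempty)
    {A : Set X} (hA : Aᶜ ∈ P) (hgen : StableUnderGeneralization A) : IsOpen A := by
  refine hℬ.isOpen_iff.2 fun x hx => ?_
  by_contra! hA_nhds
  have hFP : insert Aᶜ {B | B ∈ ℬ ∧ x ∈ B} ⊆ P := insert_subset hA fun B hB => hℬP hB.1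
  obtain ⟨z, hz⟩ := hcompact _ hFP fun G hG hGfin =>
    hℬ.sInter_nonempty_of_subset_insert_compl hA_nhds hG hGfin
  have hzx : z ⤳ x :=
    hℬ.specializes_of_forall_mem fun B hB hxB => hz B (mem_insert_of_mem _ ⟨hB, hxB⟩)
  exact hz Aᶜ (mem_insert _ _) (hgen hzx hx)

end TopologicalSpace.IsTopologicalBasis

theorem stableUnderGeneralization_iff_mem_closure {X : Type*} [TopologicalSpace X] {A : Set X} :
    StableUnderGeneralization A ↔ ∀ x ∈ A, ∀ y : X, x ∈ closure {y} → y ∈ A :=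
  ⟨fun h _ hx _ hxy => h (specializes_iff_mem_closure.2 hxy) hx,
    fun h _ _ hyx hx => h _ hx _ (specializes_iff_mem_closure.1 hyx)⟩

theorem statement3_general {X : Type*} [t : TopologicalSpace X] (P : Set (Set X))
    (hcompl : ∀ A ∈ P, Aᶜ ∈ P)
    (hcompact : ∀ F ⊆ P, (∀ G ⊆ F, G.Finite → (⋂₀ G).Nonempty) → (⋂₀ F).Nonempty)
    (htight : IsTopologicalBasis {A | A ∈ P ∧ IsOpen A}) :
    generateFrom {A | A ∈ P ∧ ∀ x ∈ A, ∀ y : X, x ∈ closure {y} → y ∈ A} = t := by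
  simp only [← stableUnderGeneralization_iff_mem_closure]
  apply le_antisymm
  · conv_rhs => rw [htight.eq_generateFrom]
    exact generateFrom_anti fun A hA => ⟨hA.1, hA.2.stableUnderGeneralization⟩
  · refine le_generateFrom fun A hA => ?_
    exact htight.isOpen_of_stableUnderGeneralization (fun B hB => hB.1) hcompact
      (hcompl A hA.1) hA.2

/-- Let `(X, τ, 𝒫)` be a compact and tight general space and let `R_τ` be the
specialization preorder of `X` (`x R_τ y` iff `x ∈ closure {y}`). Then the topology generated by
the family of those `A ∈ 𝒫` that are `R_τ`-upsets equals `τ`. -/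
theorem statement3 {X : Type*} [t : TopologicalSpace X] (P : Set (Set X))
    (hempty : (∅ : Set X) ∈ P) (huniv : (univ : Set X) ∈ P)
    (hunion : ∀ A ∈ P, ∀ B ∈ P, A ∪ B ∈ P)
    (hcompl : ∀ A ∈ P, Aᶜ ∈ P)
    (hclosure : ∀ A ∈ P, closure A ∈ P)
    (hcompact : ∀ F ⊆ P, (∀ G ⊆ F, G.Finite → (⋂₀ G).Nonempty) → (⋂₀ F).Nonempty)
    (htight : IsTopologicalBasis {A | A ∈ P ∧ IsOpen A}) :
    generateFrom {A | A ∈ P ∧ ∀ x ∈ A, ∀ y : X, x ∈ closure {y} → y ∈ A} = t :=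
  statement3_general (t := t) P hcompl hcompact htight
end

section
/- Every countable rooted S4-frame is an interior image of the rational line: if (W, R) is a countable rooted S4-frame, then there exists a surjective map f : ℚ → W that is continuous and open with respect to the standard order topology on ℚ and the Alexandroff topology of (W, R). -/
open Set

/-- The Alexandroff topology of a relation `R`: opens are exactly the `R`-upsets. -/
def alexandroff {W : Type*} (R : W → W → Prop) : TopologicalSpace W where
  IsOpen U := ∀ x ∈ U, ∀ y, R x y → y ∈ U
  isOpen_univ := fun _ _ y _ => mem_univ y
  isOpen_inter := fun _ _ hU hV x hx y hxy => ⟨hU x hx.1 y hxy, hV x hx.2 y hxy⟩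
  isOpen_sUnion := fun S hS x hx y hxy => by
    obtain ⟨U, hU, hxU⟩ := hx
    exact ⟨U, hU, hS U hU x hxU y hxy⟩

namespace S4Aux

/-- digit values: evens positive decreasing to 0, odds negative increasing to 0 -/
def phi (n : ℕ) : ℚ :=
  if n % 2 = 0 then (((n / 2 : ℕ) : ℚ) + 1)⁻¹ else -(((n / 2 : ℕ) : ℚ) + 1)⁻¹

lemma phi_pos {n : ℕ} (h : n % 2 = 0) : 0 < phi n := by
  rw [phi, if_pos h]; positivity

lemma phi_neg {n : ℕ} (h : n % 2 ≠ 0) : phi n < 0 := by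
  rw [phi, if_neg h]
  have : (0:ℚ) < (((n / 2 : ℕ) : ℚ) + 1)⁻¹ := by positivity
  linarith

lemma phi_ne_zero (n : ℕ) : phi n ≠ 0 := by
  rcases Nat.eq_zero_or_pos (n % 2) with h | h
  · exact ne_of_gt (phi_pos h)
  · exact ne_of_lt (phi_neg (by omega))

lemma phi_even (k : ℕ) : phi (2 * k) = (((k : ℚ)) + 1)⁻¹ := by
  rw [phi, if_pos (by omega)]
  congr 2
  norm_cast
  omega

lemma phi_odd (k : ℕ) : phi (2 * k + 1) = -(((k : ℚ)) + 1)⁻¹ := by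
  rw [phi, if_neg (by omega)]
  congr 3
  norm_cast
  omega

lemma phi_injective : Function.Injective phi := by
  intro m n h
  rcases Nat.eq_zero_or_pos (m % 2) with hm | hm <;> rcases Nat.eq_zero_or_pos (n % 2) with hn | hn
  · rw [phi, if_pos hm, phi, if_pos hn] at h
    have := inv_injective h
    have : (m / 2 : ℕ) = (n / 2 : ℕ) := by exact_mod_cast (by linarith : ((m/2:ℕ):ℚ) = ((n/2:ℕ):ℚ))
    omega
  · exact absurd h (by have := phi_pos hm; have := phi_neg (n := n) (by omega); intro h; linarith [h])
  · exact absurd h (by have := phi_neg (n := m) (by omega); have := phi_pos hn; intro h; linarith [h])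
  · rw [phi, if_neg (by omega), phi, if_neg (by omega)] at h
    have h' := neg_injective h
    have := inv_injective h'
    have : (m / 2 : ℕ) = (n / 2 : ℕ) := by exact_mod_cast (by linarith : ((m/2:ℕ):ℚ) = ((n/2:ℕ):ℚ))
    omega

/-- the digit stream of a finite sequence, padded by `0`. -/
def dig : List ℕ → ℕ → ℚ
  | [], _ => 0
  | n :: _, 0 => phi n
  | _ :: s, i + 1 => dig s i

@[simp] lemma dig_nil (i : ℕ) : dig [] i = 0 := by cases i <;> rfl

@[simp] lemma dig_cons_zero (n : ℕ) (s : List ℕ) : dig (n :: s) 0 = phi n := rfl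

@[simp] lemma dig_cons_succ (n : ℕ) (s : List ℕ) (i : ℕ) : dig (n :: s) (i + 1) = dig s i := rfl

lemma dig_append_left : ∀ (s t : List ℕ) {j : ℕ}, j < s.length → dig (s ++ t) j = dig s j
  | [], _, j, h => by simp at h
  | n :: s, t, 0, _ => rfl
  | n :: s, t, j + 1, h => by
      simpa using dig_append_left s t (by simpa using h)

lemma dig_append_right : ∀ (s t : List ℕ) (j : ℕ), dig (s ++ t) (s.length + j) = dig t j
  | [], t, j => by simp
  | n :: s, t, j => by
      have : (n :: s).length + j = (s.length + j) + 1 := by simp; omega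
      rw [this]
      simpa using dig_append_right s t j

lemma dig_ne_zero : ∀ (s : List ℕ) {i : ℕ}, i < s.length → dig s i ≠ 0
  | [], i, h => by simp at h
  | n :: s, 0, _ => by simpa using phi_ne_zero n
  | n :: s, i + 1, h => by simpa using dig_ne_zero s (by simpa using h)

lemma dig_eq_zero : ∀ (s : List ℕ) {i : ℕ}, s.length ≤ i → dig s i = 0
  | [], i, _ => by simp
  | n :: s, i + 1, h => by simpa using dig_eq_zero s (by simpa using h)

lemma dig_get : ∀ (s : List ℕ) {i : ℕ} (h : i < s.length), dig s i = phi (s.get ⟨i, h⟩)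
  | n :: s, 0, _ => rfl
  | n :: s, i + 1, h => by simpa using dig_get s (by simpa using h)

lemma prefix_of_agree : ∀ (s t : List ℕ), (∀ j < s.length, dig s j = dig t j) → s <+: t
  | [], t, _ => List.nil_prefix
  | n :: s, [], h => absurd (h 0 (by simp)) (by simpa using phi_ne_zero n)
  | n :: s, m :: t, h => by
      have h0 : phi n = phi m := by simpa using h 0 (by simp)
      have hnm := phi_injective h0
      subst hnm
      have := prefix_of_agree s t (fun j hj => by simpa using h (j + 1) (by simpa using hj))
      exact List.cons_prefix_cons.mpr ⟨rfl, this⟩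

lemma dig_injective : Function.Injective dig := by
  intro s t h
  have h1 := prefix_of_agree s t (fun j _ => by rw [h])
  have h2 := prefix_of_agree t s (fun j _ => by rw [h])
  exact h1.eq_of_length (le_antisymm h1.length_le h2.length_le)


/-- lexicographic order on digit streams -/
def ltL (s t : List ℕ) : Prop :=
  ∃ i, (∀ j < i, dig s j = dig t j) ∧ dig s i < dig t i

lemma toLex_dig_lt_iff {s t : List ℕ} :
    toLex (dig s) < toLex (dig t) ↔ ltL s t := Iff.rfl

lemma ltL_asymm {s t : List ℕ} (h : ltL s t) (h' : ltL t s) : False :=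
  lt_asymm (toLex_dig_lt_iff.mpr h) (toLex_dig_lt_iff.mpr h')

/-- compare two extensions of a common prefix by their first new digit -/
lemma ltL_append {p u v : List ℕ} (h : dig u 0 < dig v 0) : ltL (p ++ u) (p ++ v) := by
  refine ⟨p.length, fun j hj => ?_, ?_⟩
  · rw [dig_append_left p u hj, dig_append_left p v hj]
  · have hu := dig_append_right p u 0
    have hv := dig_append_right p v 0
    rw [Nat.add_zero] at hu hv
    rw [hu, hv]; exact h

lemma ltL_self_append {p v : List ℕ} (h : 0 < dig v 0) : ltL p (p ++ v) := by
  have := ltL_append (p := p) (u := []) (v := v) (by simpa using h)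
  simpa using this

lemma ltL_append_self {p u : List ℕ} (h : dig u 0 < 0) : ltL (p ++ u) p := by
  have := ltL_append (p := p) (u := u) (v := []) (by simpa using h)
  simpa using this

/-- a minimal differing digit position -/
lemma exists_min_diff {s t : List ℕ} (h : s ≠ t) :
    ∃ i, (∀ j < i, dig s j = dig t j) ∧ dig s i ≠ dig t i := by
  classical
  have hne : ∃ i, dig s i ≠ dig t i := by
    by_contra hc
    push_neg at hc
    exact h (dig_injective (funext hc))
  refine ⟨Nat.find hne, fun j hj => ?_, Nat.find_spec hne⟩
  by_contra hj'
  exact (Nat.find_le hj').not_gt hj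

/-- the open interval `(s++[1], s++[0])` is inside the subtree of `s` -/
lemma prefix_of_between {s t : List ℕ} (h1 : ltL (s ++ [1]) t) (h2 : ltL t (s ++ [0])) :
    s <+: t := by
  classical
  refine prefix_of_agree s t (fun j hj => ?_)
  by_contra hne
  have hst : s ≠ t := fun e => hne (by rw [e])
  obtain ⟨i, hag, hd⟩ := exists_min_diff hst
  have hi : i < s.length := by
    by_contra hi
    push_neg at hi
    exact hd (by
      have := hag j (lt_of_lt_of_le hj hi)
      exact absurd (hag j (lt_of_lt_of_le hj hi)) hne) |>.elim
  rcases lt_or_gt_of_ne hd with hlt | hgt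
  · -- s < t at i ... then s++[0] < t : contradiction with h2
    have : ltL (s ++ [0]) t :=
      ⟨i, fun j' hj' => by rw [dig_append_left s [0] (hj'.trans hi), hag j' hj'],
        by rw [dig_append_left s [0] hi]; exact hlt⟩
    exact ltL_asymm this h2
  · have : ltL t (s ++ [1]) :=
      ⟨i, fun j' hj' => by rw [dig_append_left s [1] (hj'.trans hi), hag j' hj'],
        by rw [dig_append_left s [1] hi]; exact hgt⟩
    exact ltL_asymm this h1

lemma ltL_child_even (s : List ℕ) (k : ℕ) : ltL s (s ++ [2 * k]) :=
  ltL_self_append (by simpa using phi_pos (n := 2 * k) (by omega))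

/-- eventually all even children are below any upper bound -/
lemma ltL_child_lt {s b : List ℕ} (h : ltL s b) :
    ∃ N, ∀ k, N ≤ k → ltL (s ++ [2 * k]) b := by
  classical
  by_cases hp : s <+: b
  · obtain ⟨w, hw⟩ := hp
    have hwne : w ≠ [] := by
      rintro rfl
      simp at hw
      subst hw
      exact ltL_asymm h h
    obtain ⟨m, w', rfl⟩ := List.exists_cons_of_ne_nil hwne
    have hmpos : 0 < phi m := by
      rcases lt_trichotomy (phi m) 0 with hneg | h0 | hpos
      · exact absurd (by subst hw; exact ltL_append_self (p := s) (u := m :: w') (by simpa using hneg)) (fun hh => ltL_asymm hh h)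
      · exact absurd h0 (phi_ne_zero m)
      · exact hpos
    have hmeven : m % 2 = 0 := by
      by_contra hodd
      exact absurd (phi_neg hodd) (not_lt.mpr hmpos.le)
    refine ⟨m / 2 + 1, fun k hk => ?_⟩
    have : ltL (s ++ [2 * k]) (s ++ (m :: w')) := by
      refine ltL_append ?_
      have h2k : dig [2 * k] 0 = ((k : ℚ) + 1)⁻¹ := by simpa using phi_even k
      have hm : dig (m :: w') 0 = ((((m / 2 : ℕ)) : ℚ) + 1)⁻¹ := by
        simp only [dig_cons_zero, phi, if_pos hmeven]
      rw [h2k, hm]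
      apply inv_strictAnti₀
      · positivity
      · have : (m / 2 : ℕ) < k := by omega
        have := (Nat.cast_lt (α := ℚ)).mpr this
        linarith
    rwa [hw] at this
  · have hsb : s ≠ b := fun e => hp (e ▸ List.prefix_refl s)
    obtain ⟨i, hag, hd⟩ := exists_min_diff hsb
    have hi : i < s.length := by
      by_contra hi
      push_neg at hi
      exact hp (prefix_of_agree s b (fun j hj => hag j (lt_of_lt_of_le hj hi)))
    have hlt : dig s i < dig b i := by
      rcases lt_or_gt_of_ne hd with hlt | hgt
      · exact hlt
      · exact absurd ⟨i, fun j hj => (hag j hj).symm, hgt⟩ (fun hh => ltL_asymm hh h)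
    exact ⟨0, fun k _ =>
      ⟨i, fun j hj => by rw [dig_append_left s [2 * k] (hj.trans hi)]; exact hag j hj,
        by rw [dig_append_left s [2 * k] hi]; exact hlt⟩⟩


/-- nodes of our countable dense order -/
structure Node where
  s : List ℕ

lemma Node.ext' : ∀ {x y : Node}, x.s = y.s → x = y
  | ⟨_⟩, ⟨_⟩, rfl => rfl

noncomputable instance : LinearOrder Node :=
  LinearOrder.lift' (fun x => toLex (dig x.s))
    (fun x y h => Node.ext' (dig_injective (by simpa using congrArg ofLex h)))

lemma Node.lt_iff {x y : Node} : x < y ↔ ltL x.s y.s := Iff.rfl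

instance : Countable Node :=
  Function.Injective.countable (f := Node.s) (fun x y h => Node.ext' h)

instance : Nonempty Node := ⟨⟨[]⟩⟩

instance : NoMaxOrder Node :=
  ⟨fun x => ⟨⟨x.s ++ [2 * 0]⟩, Node.lt_iff.mpr (ltL_child_even x.s 0)⟩⟩

instance : NoMinOrder Node :=
  ⟨fun x => ⟨⟨x.s ++ [1]⟩, Node.lt_iff.mpr
    (ltL_append_self (by simpa using phi_neg (n := 1) (by omega)))⟩⟩

instance : DenselyOrdered Node := by
  constructor
  rintro ⟨s⟩ ⟨t⟩ hlt
  obtain ⟨i, hag, hd⟩ := Node.lt_iff.mp hlt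
  by_cases hit : i < t.length
  · refine ⟨⟨t ++ [1]⟩, Node.lt_iff.mpr ?_, Node.lt_iff.mpr
      (ltL_append_self (by simpa using phi_neg (n := 1) (by omega)))⟩
    exact ⟨i, fun j hj => by rw [hag j hj, dig_append_left t [1] (hj.trans hit)],
      by rw [dig_append_left t [1] hit]; exact hd⟩
  · -- t is a proper prefix of s, next digit of s is negative
    push_neg at hit
    have hdt : dig t i = 0 := dig_eq_zero t hit
    have hsneg : dig s i < 0 := by rw [hdt] at hd; exact hd
    have his : i < s.length := by
      by_contra hc
      push_neg at hc
      exact absurd (dig_eq_zero s hc) (ne_of_lt hsneg)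
    have hts : t <+: s := by
      refine prefix_of_agree t s (fun j hj => ?_)
      exact (hag j (lt_of_lt_of_le hj hit)).symm
    have hit' : i = t.length := by
      by_contra hne
      have h1 : t.length < i := lt_of_le_of_ne hit (fun e => hne e.symm)
      have := hag t.length h1
      have h2 : dig s t.length = 0 := by rw [this]; exact dig_eq_zero t le_rfl
      have h3 : t.length < s.length := lt_trans h1 his
      exact dig_ne_zero s h3 h2
    obtain ⟨w, hw⟩ := hts
    set m := s.get ⟨i, his⟩ with hm
    have hdigm : dig s i = phi m := dig_get s his
    have hmodd : m % 2 ≠ 0 := by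
      intro heven
      exact absurd (hdigm ▸ phi_pos heven) (not_lt.mpr hsneg.le)
    set d := 2 * (m / 2) + 3 with hdd
    have hw0 : dig w 0 = phi m := by
      have := dig_append_right t w 0
      rw [Nat.add_zero, hw, ← hit'] at this
      rw [← this, hdigm]
    have hcmp : dig w 0 < dig [d] 0 := by
      rw [hw0]
      have hphim : phi m = -((((m / 2 : ℕ)) : ℚ) + 1)⁻¹ := by rw [phi, if_neg hmodd]
      have hphid : phi d = -((((m / 2 : ℕ) : ℚ) + 1) + 1)⁻¹ := by
        have h1 : d % 2 ≠ 0 := by omega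
        have h2 : (d / 2 : ℕ) = m / 2 + 1 := by omega
        rw [phi, if_neg h1, h2]
        push_cast
        ring_nf
      have hpos : (0:ℚ) < (((m / 2 : ℕ)) : ℚ) + 1 := by positivity
      have : ((((m / 2 : ℕ) : ℚ) + 1) + 1)⁻¹ < ((((m / 2 : ℕ)) : ℚ) + 1)⁻¹ := by
        apply inv_strictAnti₀ hpos
        linarith
      simp only [dig_cons_zero]
      rw [hphim, hphid]
      linarith
    have hneg : dig [d] 0 < 0 := by
      simpa using phi_neg (n := d) (by omega)
    refine ⟨⟨t ++ [d]⟩, Node.lt_iff.mpr ?_, Node.lt_iff.mpr (ltL_append_self hneg)⟩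
    have := ltL_append (p := t) hcmp
    rwa [hw] at this

noncomputable instance : TopologicalSpace Node := Preorder.topology Node

instance : OrderTopology Node := ⟨rfl⟩


section Label

variable {W : Type*} (R : W → W → Prop) (e : ℕ → W)

open Classical in
/-- one labelling step: try to move to the element coded by the child index -/
noncomputable def step (w : W) (n : ℕ) : W :=
  if R w (e ((n / 2).unpair.2)) then e ((n / 2).unpair.2) else w

/-- label of a node: walk from the root following the child indices -/
noncomputable def lab (r : W) (x : Node) : W :=
  x.s.foldl (step R e) r

lemma R_step (hrefl : ∀ w, R w w) (w : W) (n : ℕ) : R w (step R e w n) := by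
  unfold step
  split
  · assumption
  · exact hrefl w

lemma R_foldl (hrefl : ∀ w, R w w) (htrans : ∀ u v w, R u v → R v w → R u w) (w : W) (t : List ℕ) : R w (t.foldl (step R e) w) := by
  induction t generalizing w with
  | nil => exact hrefl w
  | cons n t ih =>
      exact htrans _ _ _ (R_step R e hrefl w n) (ih (step R e w n))

lemma lab_append (r : W) (t u : List ℕ) :
    lab R e r ⟨t ++ u⟩ = u.foldl (step R e) (lab R e r ⟨t⟩) := by
  simp [lab, List.foldl_append]

lemma step_realize (he : Function.Surjective e) (w v : W) (hwv : R w v) (N : ℕ) :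
    ∃ k, N ≤ k ∧ step R e w (2 * k) = v := by
  obtain ⟨m, hm⟩ := he v
  refine ⟨Nat.pair N m, Nat.left_le_pair N m, ?_⟩
  have h2 : (2 * Nat.pair N m) / 2 = Nat.pair N m := by omega
  unfold step
  rw [h2, Nat.unpair_pair, hm, if_pos hwv]

lemma lab_continuous (hrefl : ∀ w, R w w) (htrans : ∀ u v w, R u v → R v w → R u w) (r : W) :
    @Continuous Node W _ (alexandroff R) (lab R e r) := by
  rw [continuous_def]
  intro U hU
  rw [isOpen_iff_mem_nhds]
  intro x hx
  have hsub : Ioo (⟨x.s ++ [1]⟩ : Node) ⟨x.s ++ [0]⟩ ⊆ lab R e r ⁻¹' U := by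
    rintro ⟨t⟩ ⟨h1, h2⟩
    have hpre : x.s <+: t := prefix_of_between (Node.lt_iff.mp h1) (Node.lt_iff.mp h2)
    obtain ⟨u, hu⟩ := hpre
    have hxt : Node.mk t = ⟨x.s ++ u⟩ := Node.ext' hu.symm
    have hR : R (lab R e r x) (lab R e r ⟨t⟩) := by
      rw [hxt, lab_append]
      exact R_foldl R e hrefl htrans _ u
    exact hU _ hx _ hR
  have h1 : (⟨x.s ++ [1]⟩ : Node) < x := Node.lt_iff.mpr
    (ltL_append_self (by simpa using phi_neg (n := 1) (by omega)))
  have h0 : x < (⟨x.s ++ [0]⟩ : Node) := by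
    have := ltL_child_even x.s 0
    exact Node.lt_iff.mpr (by simpa using this)
  exact Filter.mem_of_superset (Ioo_mem_nhds h1 h0) hsub

lemma lab_isOpenMap (he : Function.Surjective e) (r : W) :
    @IsOpenMap Node W _ (alexandroff R) (lab R e r) := by
  intro V hV
  show ∀ w ∈ lab R e r '' V, ∀ y, R w y → y ∈ lab R e r '' V
  rintro w ⟨x, hxV, rfl⟩ y hy
  obtain ⟨l, u, hx, hIoo⟩ := mem_nhds_iff_exists_Ioo_subset.mp (hV.mem_nhds hxV)
  obtain ⟨N, hN⟩ := ltL_child_lt (Node.lt_iff.mp hx.2)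
  obtain ⟨k, hkN, hk⟩ := step_realize R e he _ y hy N
  refine ⟨⟨x.s ++ [2 * k]⟩, hIoo ⟨lt_trans hx.1 (Node.lt_iff.mpr (ltL_child_even x.s k)),
    Node.lt_iff.mpr (hN k hkN)⟩, ?_⟩
  rw [show (⟨x.s ++ [2 * k]⟩ : Node) = ⟨x.s ++ [2 * k]⟩ from rfl, lab_append]
  simpa [List.foldl] using hk

lemma lab_surjective (he : Function.Surjective e) (r : W) (hr : ∀ v, R r v) :
    Function.Surjective (lab R e r) := by
  intro v
  obtain ⟨k, _, hk⟩ := step_realize R e he r v (hr v) 0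
  exact ⟨⟨[2 * k]⟩, by simpa [lab, List.foldl] using hk⟩

end Label

end S4Aux

/-- Every countable rooted S4-frame is an interior image of the rational
line: there is a surjective map `f : ℚ → W` that is continuous and open with respect to the
standard topology on `ℚ` and the Alexandroff topology of `(W, R)`. -/
theorem statement4 {W : Type*} [Countable W] (R : W → W → Prop)
    (hrefl : ∀ w, R w w) (htrans : ∀ u v w, R u v → R v w → R u w)
    (hroot : ∃ w, ∀ v, R w v) :
    ∃ f : ℚ → W, Function.Surjective f ∧
      @Continuous ℚ W _ (alexandroff R) f ∧ @IsOpenMap ℚ W _ (alexandroff R) f := by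

  classical
  letI : TopologicalSpace W := alexandroff R
  obtain ⟨r, hr⟩ := hroot
  have : Nonempty W := ⟨r⟩
  obtain ⟨e, he⟩ := exists_surjective_nat W
  obtain ⟨ψ⟩ := Order.iso_of_countable_dense (α := ℚ) (β := S4Aux.Node)
  refine ⟨S4Aux.lab R e r ∘ ψ, ?_, ?_, ?_⟩
  · exact (S4Aux.lab_surjective R e he r hr).comp ψ.surjective
  · exact (S4Aux.lab_continuous R e hrefl htrans r).comp ψ.toHomeomorph.continuous
  · exact (S4Aux.lab_isOpenMap R e he r).comp ψ.toHomeomorph.isOpenMap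
end

section
/- Every countable rooted S4-frame (W, R) is a p-morphic image of the infinite binary tree T₂: there exists a surjective map f : T₂ → W such that a ≤ b implies f(a) R f(b), and whenever f(a) R v there exists b ∈ T₂ with a ≤ b and f(b) = v. -/
/-- Every countable rooted S4-frame `(W, R)` is a p-morphic image of the
infinite binary tree `T₂` (finite binary sequences ordered by the prefix relation): there is a
surjective `f : T₂ → W` such that `a ≤ b` implies `f a R f b`, and whenever `f a R v` there is
`b ≥ a` with `f b = v`. -/
theorem statement5 {W : Type*} [Countable W] (R : W → W → Prop)
    (hrefl : ∀ w, R w w) (htrans : ∀ u v w, R u v → R v w → R u w)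
    (hroot : ∃ w, ∀ v, R w v) :
    ∃ f : List Bool → W, Function.Surjective f ∧
      (∀ a b : List Bool, a <+: b → R (f a) (f b)) ∧
      (∀ (a : List Bool) (v : W), R (f a) v → ∃ b : List Bool, a <+: b ∧ f b = v) := by
  classical
  obtain ⟨r, hr⟩ := hroot
  have : Nonempty W := ⟨r⟩
  obtain ⟨e0, he0⟩ := exists_surjective_nat W
  set e : ℕ → W := fun n => e0 (Nat.unpair n).1 with he
  have he' : ∀ (v : W) (n : ℕ), ∃ k, n ≤ k ∧ e k = v := by
    intro v n
    obtain ⟨m, hm⟩ := he0 v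
    refine ⟨Nat.pair m n, Nat.right_le_pair m n, ?_⟩
    simp [he, Nat.unpair_pair, hm]
  let step : W × ℕ → Bool → W × ℕ := fun p b =>
    match b with
    | false => (p.1, p.2 + 1)
    | true => if R p.1 (e p.2) then (e p.2, 0) else (p.1, p.2 + 1)
  let s : List Bool → W × ℕ := fun a => a.foldl step (r, 0)
  have hstep : ∀ (p : W × ℕ) (b : Bool), R p.1 (step p b).1 := by
    intro p b
    cases b with
    | false => exact hrefl _
    | true =>
      by_cases h : R p.1 (e p.2)
      · simpa [step, h] using h
      · simpa [step, h] using hrefl _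
  have hfold : ∀ (l : List Bool) (p : W × ℕ), R p.1 (l.foldl step p).1 := by
    intro l
    induction l with
    | nil => intro p; exact hrefl _
    | cons b t ih => intro p; exact htrans _ _ _ (hstep p b) (ih _)
  have hrep : ∀ (m n : ℕ) (w : W),
      (List.replicate m false).foldl step (w, n) = (w, n + m) := by
    intro m
    induction m with
    | zero => intro n w; simp
    | succ m ih =>
      intro n w
      simp only [List.replicate_succ, List.foldl_cons]
      show (List.replicate m false).foldl step (w, n + 1) = (w, n + (m + 1))
      rw [ih]; ring_nf
  have hback : ∀ (a : List Bool) (v : W), R (s a).1 v →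
      ∃ b : List Bool, a <+: b ∧ (s b).1 = v := by
    intro a v hv
    obtain ⟨k, hk, hek⟩ := he' v (s a).2
    refine ⟨a ++ (List.replicate (k - (s a).2) false ++ [true]), ⟨_, rfl⟩, ?_⟩
    have : s (a ++ (List.replicate (k - (s a).2) false ++ [true]))
        = (List.replicate (k - (s a).2) false ++ [true]).foldl step (s a) := by
      simp [s, List.foldl_append]
    rw [this, List.foldl_append]
    have h2 : (List.replicate (k - (s a).2) false).foldl step ((s a).1, (s a).2) = ((s a).1, k) := by
      rw [hrep]; congr 1; omega
    rw [show ((s a) : W × ℕ) = ((s a).1, (s a).2) from rfl, h2]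
    have hRv : R (s a).1 (e k) := by rw [hek]; exact hv
    simp [step, hRv, hek, hv]
  refine ⟨fun a => (s a).1, ?_, ?_, ?_⟩
  · intro v
    obtain ⟨b, _, hb⟩ := hback [] v (by simpa [s] using hr v)
    exact ⟨b, hb⟩
  · rintro a b ⟨t, rfl⟩
    show R (s a).1 (s (a ++ t)).1
    have : s (a ++ t) = t.foldl step (s a) := by simp [s, List.foldl_append]
    rw [this]; exact hfold t (s a)
  · exact hback
end

section
/- The poset L₂ is a directed-complete partial order in which every directed subset is a chain: every nonempty directed subset of L₂ is linearly ordered and has a least upper bound in L₂. Moreover, the family {↑a : a ∈ T₂} of upsets of finite sequences is a basis for the Scott topology on L₂. -/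
open Set

/-- Finite and infinite `σ`-valued sequences, encoded as functions `ℕ → Option σ` whose
domain of definition is an initial segment of `ℕ`. -/
structure Lgen (σ : Type*) where
  toFun : ℕ → Option σ
  init : ∀ n, toFun (n + 1) ≠ none → toFun n ≠ none

/-- The initial-segment (prefix) partial order on `Lgen σ`. -/
instance Lgen.instPartialOrder {σ : Type*} : PartialOrder (Lgen σ) where
  le f g := ∀ (n : ℕ) (s : σ), f.toFun n = some s → g.toFun n = some s
  le_refl f n s h := h
  le_trans f g h hfg hgh n s hs := hgh n s (hfg n s hs)
  le_antisymm f g hfg hgf := by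
    obtain ⟨ff, hf⟩ := f
    obtain ⟨gf, hg⟩ := g
    have hfun : ff = gf := by
      funext n
      cases hfn : ff n with
      | some s =>
        have h2 : gf n = some s := hfg n s hfn
        exact h2.symm
      | none =>
        cases hgn : gf n with
        | some s =>
          have h2 : ff n = some s := hgf n s hgn
          rw [hfn] at h2
          exact absurd h2 (by simp)
        | none => rfl
    subst hfun
    rfl

/-- The finite sequence given by a list, as an element of `Lgen σ`. -/
def Lgen.ofList {σ : Type*} (l : List σ) : Lgen σ where
  toFun n := l[n]?
  init n h := by
    simp only [ne_eq, List.getElem?_eq_none_iff, not_le] at h ⊢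
    omega

/-- The infinite binary tree with limits `L₂`: finite and infinite binary sequences with the
initial-segment order. -/
abbrev L2 : Type := Lgen Bool

/-- The Scott topology of a preorder: opens are the upper sets `U` such that every nonempty
directed set whose least upper bound lies in `U` meets `U`. -/
def scottTopology (α : Type*) [Preorder α] : TopologicalSpace α where
  IsOpen U := IsUpperSet U ∧ ∀ d : Set α, d.Nonempty → DirectedOn (· ≤ ·) d →
      ∀ x, IsLUB d x → x ∈ U → (d ∩ U).Nonempty
  isOpen_univ := ⟨isUpperSet_univ, fun d hd _ _ _ _ => hd.imp fun y hy => ⟨hy, mem_univ y⟩⟩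
  isOpen_inter := by
    rintro U V ⟨hU1, hU2⟩ ⟨hV1, hV2⟩
    refine ⟨hU1.inter hV1, fun d hdne hdir x hlub hx => ?_⟩
    obtain ⟨a, ha, haU⟩ := hU2 d hdne hdir x hlub hx.1
    obtain ⟨b, hb, hbV⟩ := hV2 d hdne hdir x hlub hx.2
    obtain ⟨c, hc, hac, hbc⟩ := hdir a ha b hb
    exact ⟨c, hc, hU1 hac haU, hV1 hbc hbV⟩
  isOpen_sUnion := by
    intro S hS
    refine ⟨fun a b hab ha => ?_, fun d hdne hdir x hlub hx => ?_⟩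
    · obtain ⟨U, hU, haU⟩ := ha
      exact ⟨U, hU, (hS U hU).1 hab haU⟩
    · obtain ⟨U, hU, hxU⟩ := hx
      obtain ⟨a, ha, haU⟩ := (hS U hU).2 d hdne hdir x hlub hxU
      exact ⟨a, ha, U, hU, haU⟩

namespace Lgen

@[simp] lemma ofList_toFun {σ : Type*} (l : List σ) (n : ℕ) : (ofList l).toFun n = l[n]? := rfl

lemma defined_mono (x : L2) {m n : ℕ} (h : m ≤ n) (hn : x.toFun n ≠ none) :
    x.toFun m ≠ none := by
  induction n with
  | zero => rwa [Nat.le_zero.mp h]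
  | succ k ih =>
    rcases Nat.lt_or_ge m (k + 1) with h' | h'
    · exact ih (Nat.lt_succ_iff.mp h') (x.init k hn)
    · have : m = k + 1 := le_antisymm h h'
      rwa [this]

lemma le_or_le_of_le {x y z : L2} (hx : x ≤ z) (hy : y ≤ z) : x ≤ y ∨ y ≤ x := by
  by_cases h : x ≤ y
  · exact Or.inl h
  · right
    have h' : ¬ ∀ (n : ℕ) (s : Bool), x.toFun n = some s → y.toFun n = some s := h
    push_neg at h'
    obtain ⟨n, s, hxs, hys⟩ := h'
    have hzn : z.toFun n = some s := hx n s hxs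
    have hyn : y.toFun n = none := by
      cases hy' : y.toFun n with
      | none => rfl
      | some t =>
        have h2 := hy n t hy'
        rw [hzn] at h2
        obtain rfl : s = t := Option.some_inj.mp h2
        exact absurd hy' hys
    intro m t hyt
    have hmn : m < n := by
      by_contra hc
      push_neg at hc
      exact defined_mono y hc (by rw [hyt]; simp) hyn
    have hxm : x.toFun m ≠ none := defined_mono x hmn.le (by rw [hxs]; simp)
    obtain ⟨u, hu⟩ := Option.ne_none_iff_exists'.mp hxm
    have h1 : z.toFun m = some u := hx m u hu
    have h2 : z.toFun m = some t := hy m t hyt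
    rw [h1] at h2
    rw [hu, Option.some_inj.mp h2]

lemma consistent {d : Set L2} (hdir : DirectedOn (· ≤ ·) d) {x y : L2} (hx : x ∈ d)
    (hy : y ∈ d) {n : ℕ} {s t : Bool} (hxs : x.toFun n = some s) (hyt : y.toFun n = some t) :
    s = t := by
  obtain ⟨z, _, hxz, hyz⟩ := hdir x hx y hy
  have h1 := hxz n s hxs
  have h2 := hyz n t hyt
  rw [h1] at h2
  exact Option.some_inj.mp h2

open Classical in
/-- The least upper bound of a directed set in `L2`. -/
noncomputable def dlub (d : Set L2) : L2 where
  toFun n := if h : ∃ s : Bool, ∃ x ∈ d, x.toFun n = some s then some h.choose else none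
  init n hne := by
    beta_reduce at hne ⊢
    split_ifs at hne with h
    · obtain ⟨s, x, hx, hxs⟩ := h
      have hxn : x.toFun n ≠ none := x.init n (by rw [hxs]; simp)
      obtain ⟨t, ht⟩ := Option.ne_none_iff_exists'.mp hxn
      rw [dif_pos ⟨t, x, hx, ht⟩]
      simp
    · simp at hne

lemma dlub_eq_some {d : Set L2} (hdir : DirectedOn (· ≤ ·) d) {n : ℕ} {s : Bool} :
    (dlub d).toFun n = some s ↔ ∃ x ∈ d, x.toFun n = some s := by
  constructor
  · intro h
    simp only [dlub] at h
    split_ifs at h with hc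
    · obtain ⟨x, hx, hxs⟩ := hc.choose_spec
      rw [Option.some_inj.mp h] at hxs
      exact ⟨x, hx, hxs⟩
  · rintro ⟨x, hx, hxs⟩
    have hc : ∃ s : Bool, ∃ x ∈ d, x.toFun n = some s := ⟨s, x, hx, hxs⟩
    obtain ⟨y, hy, hys⟩ := hc.choose_spec
    simp only [dlub, dif_pos hc]
    rw [consistent hdir hy hx hys hxs]

lemma isLUB_dlub {d : Set L2} (hdir : DirectedOn (· ≤ ·) d) : IsLUB d (dlub d) := by
  constructor
  · intro x hx n s hxs
    exact (dlub_eq_some hdir).mpr ⟨x, hx, hxs⟩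
  · intro u hu n s hs
    obtain ⟨x, hx, hxs⟩ := (dlub_eq_some hdir).mp hs
    exact hu hx n s hxs

/-- The first `n` entries of `x` as a list. -/
def truncList (x : L2) : ℕ → List Bool
  | 0 => []
  | n + 1 =>
    match x.toFun n with
    | some s => truncList x n ++ [s]
    | none => truncList x n

lemma ofList_truncList (x : L2) (n m : ℕ) :
    (ofList (truncList x n)).toFun m = if m < n then x.toFun m else none := by
  induction n generalizing m with
  | zero => simp [truncList]
  | succ k ih =>
    cases hxk : x.toFun k with
    | some s =>
      have hlen : (truncList x k).length = k := by
        have h1 : ¬ k < (truncList x k).length := by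
          have h0 : (truncList x k)[k]? = none := by
            rw [← ofList_toFun, ih]
            simp
          rw [List.getElem?_eq_none_iff] at h0
          omega
        have h2 : ∀ m < k, m < (truncList x k).length := by
          intro m hm
          have hxm : x.toFun m ≠ none := defined_mono x hm.le (by rw [hxk]; simp)
          obtain ⟨t, ht⟩ := Option.ne_none_iff_exists'.mp hxm
          have h3 : (truncList x k)[m]? ≠ none := by
            rw [← ofList_toFun, ih, if_pos hm, ht]
            simp
          rw [Ne, List.getElem?_eq_none_iff] at h3
          omega
        rcases Nat.eq_zero_or_pos k with h | h
        · omega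
        · have := h2 (k - 1) (by omega)
          omega
      simp only [truncList, hxk, ofList_toFun]
      rcases lt_trichotomy m k with hm | hm | hm
      · rw [List.getElem?_append_left (by omega), if_pos (by omega)]
        rw [← ofList_toFun, ih, if_pos hm]
      · subst hm
        rw [if_pos (by omega)]
        rw [show (truncList x m ++ [s])[m]? = some s by
          rw [List.getElem?_append_right (by omega)]
          simp [hlen]]
        exact hxk.symm
      · rw [if_neg (by omega), List.getElem?_eq_none_iff.mpr (by simp [hlen]; omega)]
    | none =>
      simp only [truncList, hxk]
      rw [ih]
      rcases lt_trichotomy m k with hm | hm | hm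
      · rw [if_pos hm, if_pos (by omega)]
      · subst hm
        rw [if_neg (lt_irrefl m), if_pos (by omega), hxk]
      · rw [if_neg (by omega), if_neg (by omega)]

end Lgen

/-- The poset `L₂` is a directed-complete partial order in which every
nonempty directed subset is a chain and has a least upper bound; moreover the family
`{↑a : a ∈ T₂}` of upsets of finite sequences is a basis for the Scott topology on `L₂`. -/
theorem statement7 :
    (∀ d : Set L2, d.Nonempty → DirectedOn (· ≤ ·) d →
      ((∀ x ∈ d, ∀ y ∈ d, x ≤ y ∨ y ≤ x) ∧ ∃ x : L2, IsLUB d x)) ∧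
    @TopologicalSpace.IsTopologicalBasis L2 (scottTopology L2)
      {S : Set L2 | ∃ a : List Bool, S = {b : L2 | Lgen.ofList a ≤ b}} := by
  constructor
  · intro d _ hdir
    refine ⟨fun x hx y hy => ?_, Lgen.dlub d, Lgen.isLUB_dlub hdir⟩
    obtain ⟨z, _, hxz, hyz⟩ := hdir x hx y hy
    exact Lgen.le_or_le_of_le hxz hyz
  · letI : TopologicalSpace L2 := scottTopology L2
    apply TopologicalSpace.isTopologicalBasis_of_isOpen_of_nhds
    · rintro u ⟨a, rfl⟩
      refine ⟨fun b c hbc hb => le_trans hb hbc, ?_⟩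
      intro d hne hdir x hlub hx
      by_cases hA : a = []
      · obtain ⟨y, hy⟩ := hne
        refine ⟨y, hy, ?_⟩
        intro n s hn
        rw [hA] at hn
        simp [Lgen.ofList_toFun] at hn
      · have hlena : 0 < a.length := List.length_pos_iff.mpr hA
        set n := a.length - 1 with hn
        have hna : n < a.length := by omega
        have han : (Lgen.ofList a).toFun n = some a[n] := by
          rw [Lgen.ofList_toFun, List.getElem?_eq_getElem hna]
        have hxn : x.toFun n = some a[n] := hx n a[n] han
        have heq : Lgen.dlub d = x := (Lgen.isLUB_dlub hdir).unique hlub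
        rw [← heq] at hxn
        obtain ⟨y, hy, hyn⟩ := (Lgen.dlub_eq_some hdir).mp hxn
        refine ⟨y, hy, ?_⟩
        intro m s hms
        rw [Lgen.ofList_toFun] at hms
        have hml : m < a.length := by
          by_contra hc
          rw [List.getElem?_eq_none_iff.mpr (by omega)] at hms
          exact absurd hms (by simp)
        have hym : y.toFun m ≠ none :=
          Lgen.defined_mono y (show m ≤ n by omega) (by rw [hyn]; simp)
        obtain ⟨t, ht⟩ := Option.ne_none_iff_exists'.mp hym
        have hyx : y ≤ x := hlub.1 hy
        have h1 : x.toFun m = some t := hyx m t ht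
        have h2 : x.toFun m = some s := hx m s (by rw [Lgen.ofList_toFun]; exact hms)
        rw [h1] at h2
        rw [ht, Option.some_inj.mp h2]
    · intro b u hbu hu
      obtain ⟨hup, hscott⟩ := hu
      have hmono : ∀ m n : ℕ, m ≤ n →
          Lgen.ofList (Lgen.truncList b m) ≤ Lgen.ofList (Lgen.truncList b n) := by
        intro m n hmn k s hk
        rw [Lgen.ofList_truncList] at hk
        rw [Lgen.ofList_truncList]
        split_ifs at hk with h
        rw [if_pos (by omega)]; exact hk
      set d : Set L2 := {y | ∃ n : ℕ, y = Lgen.ofList (Lgen.truncList b n)} with hd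
      have hne : d.Nonempty := ⟨_, 0, rfl⟩
      have hdir : DirectedOn (· ≤ ·) d := by
        rintro _ ⟨m, rfl⟩ _ ⟨n, rfl⟩
        exact ⟨_, ⟨max m n, rfl⟩, hmono m _ (le_max_left m n), hmono n _ (le_max_right m n)⟩
      have hlub : IsLUB d b := by
        constructor
        · rintro _ ⟨n, rfl⟩ k s hk
          rw [Lgen.ofList_truncList] at hk
          split_ifs at hk with h
          exact hk
        · intro v hv k s hk
          refine hv ⟨k + 1, rfl⟩ k s ?_
          rw [Lgen.ofList_truncList, if_pos (by omega)]
          exact hk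
      obtain ⟨y, hyd, hyU⟩ := hscott d hne hdir b hlub hbu
      obtain ⟨n, rfl⟩ := hyd
      refine ⟨{c : L2 | Lgen.ofList (Lgen.truncList b n) ≤ c}, ⟨Lgen.truncList b n, rfl⟩,
        hlub.1 ⟨n, rfl⟩, fun c hc => hup hc hyU⟩
end

section
/- Let 𝒫 be the smallest family of subsets of L₂ containing ↑a for every a ∈ T₂ and closed under finite unions and complements. Then 𝒫 is closed under the operation A ↦ ↓A = {b ∈ L₂ : ∃ c ∈ A, b ≤ c}, and (L₂, ≤, 𝒫) is a descriptive S4-frame: 𝒫 separates points (for x ≠ y there is A ∈ 𝒫 with x ∈ A and y ∉ A), every subfamily of 𝒫 with the finite intersection property has nonempty intersection, and whenever a ≰ b there is A ∈ 𝒫 with b ∈ A and a ∉ ↓A. -/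
open Set

/-- The smallest family of subsets of `L₂` containing `↑a` for every finite binary sequence `a`
and closed under finite unions and complements. -/
inductive P2 : Set L2 → Prop
  | basic (a : List Bool) : P2 {b : L2 | Lgen.ofList a ≤ b}
  | union {A B : Set L2} : P2 A → P2 B → P2 (A ∪ B)
  | compl {A : Set L2} : P2 A → P2 Aᶜ

/-!
A set in `𝒫` depends only on the first `N` letters of a sequence, for some `N`; conversely, since
the sets `{c | c n = o}` are finite Boolean combinations of cones `↑a`, every set depending only on
the first `N` letters lies in `𝒫`. Down-closure preserves this property: a sequence `b` that
stops before `N` is the only sequence agreeing with it below `N`, while if `b` has length at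
least `N`, every `c ≥ b` agrees with `b` below `N`. Sets depending on finitely many letters are clopen for the
topology inherited from `(Option Bool)^ℕ`, in which `L₂` is closed, hence compact; this gives the
finite intersection property. Separation and tightness are witnessed by the sets `{c | c n = o}`.
-/

namespace Lgen

variable {σ : Type*}

@[ext]
theorem ext {f g : Lgen σ} (h : ∀ n, f.toFun n = g.toFun n) : f = g := by
  cases f; cases g; congr; exact funext h

theorem le_def {f g : Lgen σ} :
    f ≤ g ↔ ∀ (n : ℕ) (s : σ), f.toFun n = some s → g.toFun n = some s := Iff.rfl

theorem toFun_ne_none_of_le (f : Lgen σ) {m n : ℕ} (hmn : m ≤ n) (h : f.toFun n ≠ none) :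
    f.toFun m ≠ none := by
  induction hmn with
  | refl => exact h
  | step _ ih => exact ih (f.init _ h)

theorem toFun_eq_none_of_le (f : Lgen σ) {m n : ℕ} (hmn : m ≤ n) (h : f.toFun m = none) :
    f.toFun n = none := by
  by_contra hn
  exact f.toFun_ne_none_of_le hmn hn h

theorem ofList_le_iff {l : List σ} {b : Lgen σ} :
    ofList l ≤ b ↔ ∀ n < l.length, b.toFun n = l[n]? := by
  refine ⟨fun h n hn => ?_, fun h n s hs => ?_⟩
  · rw [List.getElem?_eq_getElem hn]
    exact h n _ (List.getElem?_eq_getElem hn)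
  obtain ⟨hn, -⟩ := List.getElem?_eq_some_iff.mp hs
  exact (h n hn).trans hs

theorem toFun_eq_some_iff {c : Lgen σ} {n : ℕ} {s : σ} :
    c.toFun n = some s ↔ ∃ l : Fin n → σ, ofList (List.ofFn l ++ [s]) ≤ c := by
  constructor
  · intro hc
    have hdef : ∀ i < n, (c.toFun i).isSome := fun i hi =>
      Option.isSome_iff_ne_none.mpr (c.toFun_ne_none_of_le hi.le (by simp [hc]))
    refine ⟨fun i => (c.toFun i).get (hdef i i.2), ofList_le_iff.mpr fun m hm => ?_⟩
    simp only [List.length_append, List.length_ofFn, List.length_singleton] at hm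
    rcases Nat.lt_succ_iff_lt_or_eq.mp hm with hm | rfl
    · simp [List.getElem?_append_left, hm]
    · simp [hc]
  · rintro ⟨l, hl⟩
    simpa using ofList_le_iff.mp hl n (by simp)

def restrict (N : ℕ) (b : Lgen σ) : Fin N → Option σ := fun i => b.toFun i

theorem restrict_eq_restrict_iff {N : ℕ} {b c : Lgen σ} :
    b.restrict N = c.restrict N ↔ ∀ n < N, b.toFun n = c.toFun n := by
  simp [funext_iff, restrict, Fin.forall_iff]

def DeterminedBelow (N : ℕ) (A : Set (Lgen σ)) : Prop :=
  ∀ ⦃b c : Lgen σ⦄, (∀ n < N, b.toFun n = c.toFun n) → b ∈ A → c ∈ A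

namespace DeterminedBelow

variable {N : ℕ} {A : Set (Lgen σ)}

theorem mono {M : ℕ} (hNM : N ≤ M) (hA : DeterminedBelow N A) : DeterminedBelow M A :=
  fun _ _ hbc => hA fun n hn => hbc n (hn.trans_le hNM)

theorem compl (hA : DeterminedBelow N A) : DeterminedBelow N Aᶜ :=
  fun _ _ hbc hb hc => hb (hA (fun n hn => (hbc n hn).symm) hc)

theorem union {B : Set (Lgen σ)} (hA : DeterminedBelow N A) (hB : DeterminedBelow N B) :
    DeterminedBelow N (A ∪ B) :=
  fun _ _ hbc => Or.imp (hA hbc) (hB hbc)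

theorem preimage_image_restrict (hA : DeterminedBelow N A) :
    restrict N ⁻¹' (restrict N '' A) = A := by
  refine (Set.subset_preimage_image _ _).antisymm' ?_
  rintro c ⟨b, hb, hbc⟩
  exact hA (restrict_eq_restrict_iff.mp hbc) hb

theorem lowerClosure (hA : DeterminedBelow N A) :
    DeterminedBelow N (_root_.lowerClosure A : Set (Lgen σ)) := by
  rintro b b' hbb' ⟨c, hc, hbc⟩
  by_cases hshort : ∃ n < N, b.toFun n = none
  · obtain ⟨n, hn, hbn⟩ := hshort
    have hb'b : b' = b := by
      refine ext fun m => ?_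
      by_cases hm : m < N
      · exact (hbb' m hm).symm
      · have hnm : n ≤ m := by omega
        rw [b.toFun_eq_none_of_le hnm hbn, b'.toFun_eq_none_of_le hnm ((hbb' n hn) ▸ hbn)]
    exact ⟨c, hc, hb'b ▸ hbc⟩
  · push Not at hshort
    have hcb' : ∀ n < N, c.toFun n = b'.toFun n := by
      intro n hn
      obtain ⟨s, hs⟩ := Option.ne_none_iff_exists'.mp (hshort n hn)
      rw [← hbb' n hn, hs, hbc n s hs]
    exact ⟨b', hA hcb' hc, le_rfl⟩

end DeterminedBelow

instance : TopologicalSpace (Option σ) := ⊥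

instance : DiscreteTopology (Option σ) := ⟨rfl⟩

instance : TopologicalSpace (Lgen σ) := .induced toFun inferInstance

theorem isClosedEmbedding_toFun : Topology.IsClosedEmbedding (toFun : Lgen σ → ℕ → Option σ) := by
  refine ⟨⟨⟨rfl⟩, fun f g h => ext (congrFun h)⟩, ?_⟩
  have hrange : Set.range (toFun : Lgen σ → ℕ → Option σ) =
      ⋂ n, (fun f : ℕ → Option σ => (f (n + 1), f n)) ⁻¹' {p | p.1 ≠ none → p.2 ≠ none} := by
    ext f
    simp only [Set.mem_range, Set.mem_iInter, Set.mem_preimage, Set.mem_ofPred_eq]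
    exact ⟨by rintro ⟨g, rfl⟩; exact g.init, fun h => ⟨⟨f, h⟩, rfl⟩⟩
  rw [hrange]
  exact isClosed_iInter fun n => (isClosed_discrete _).preimage (by fun_prop)

instance [Finite σ] : CompactSpace (Lgen σ) := isClosedEmbedding_toFun.compactSpace

theorem continuous_restrict (N : ℕ) : Continuous (restrict N : Lgen σ → Fin N → Option σ) :=
  continuous_pi fun i => (continuous_apply (i : ℕ)).comp continuous_induced_dom

theorem DeterminedBelow.isClopen {N : ℕ} {A : Set (Lgen σ)} (hA : DeterminedBelow N A) :
    IsClopen A := by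
  rw [← hA.preimage_image_restrict]
  exact (isClopen_discrete _).preimage (continuous_restrict N)

end Lgen

open Lgen

namespace P2

theorem univ : P2 (Set.univ : Set L2) := by
  convert P2.basic []
  simp [ofList_le_iff]

theorem biUnion {ι : Type*} {s : Set ι} (hs : s.Finite) {f : ι → Set L2}
    (hf : ∀ i ∈ s, P2 (f i)) : P2 (⋃ i ∈ s, f i) := by
  induction s, hs using Set.Finite.induction_on with
  | empty => simpa using univ.compl
  | insert _ _ ih =>
    rw [Set.biUnion_insert]
    exact (hf _ (Set.mem_insert _ _)).union (ih fun i hi => hf i (Set.mem_insert_of_mem _ hi))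

theorem iUnion {ι : Type*} [Finite ι] {f : ι → Set L2} (hf : ∀ i, P2 (f i)) :
    P2 (⋃ i, f i) := by
  simpa using biUnion Set.finite_univ fun i _ => hf i

theorem iInter {ι : Type*} [Finite ι] {f : ι → Set L2} (hf : ∀ i, P2 (f i)) :
    P2 (⋂ i, f i) := by
  simpa using (iUnion fun i => (hf i).compl).compl

theorem setOf_toFun_eq (n : ℕ) (o : Option Bool) : P2 {c : L2 | c.toFun n = o} := by
  have hsome : ∀ s, P2 {c : L2 | c.toFun n = some s} := fun s => by
    simp only [toFun_eq_some_iff, Set.ofPred_exists]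
    exact iUnion fun l => P2.basic _
  cases o with
  | some s => exact hsome s
  | none =>
    convert ((hsome true).union (hsome false)).compl using 1
    ext c
    simp only [Set.mem_ofPred_eq, Set.mem_compl_iff, Set.mem_union]
    rcases c.toFun n with _ | _ | _ <;> simp

theorem preimage_restrict {N : ℕ} (S : Set (Fin N → Option Bool)) :
    P2 (Lgen.restrict N ⁻¹' S) := by
  rw [← Set.biUnion_of_singleton S, Set.preimage_iUnion₂]
  refine biUnion S.toFinite fun g _ => ?_
  have hcell : Lgen.restrict N ⁻¹' {g} = ⋂ i : Fin N, {c : L2 | c.toFun i = g i} := by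
    ext c
    simp [Lgen.restrict, funext_iff]
  rw [hcell]
  exact iInter fun i => setOf_toFun_eq i (g i)

theorem of_determinedBelow {N : ℕ} {A : Set L2} (hA : DeterminedBelow N A) : P2 A :=
  hA.preimage_image_restrict ▸ preimage_restrict _

theorem exists_determinedBelow {A : Set L2} (hA : P2 A) : ∃ N, DeterminedBelow N A := by
  induction hA with
  | basic a =>
    refine ⟨a.length, fun b c hbc hb => ?_⟩
    simp only [Set.mem_ofPred_eq, ofList_le_iff] at hb ⊢
    exact fun n hn => (hbc n hn).symm.trans (hb n hn)
  | union _ _ ihA ihB =>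
    obtain ⟨N, hN⟩ := ihA
    obtain ⟨M, hM⟩ := ihB
    exact ⟨max N M, (hN.mono (le_max_left N M)).union (hM.mono (le_max_right N M))⟩
  | compl _ ih =>
    obtain ⟨N, hN⟩ := ih
    exact ⟨N, hN.compl⟩

theorem isClosed {A : Set L2} (hA : P2 A) : IsClosed A :=
  hA.exists_determinedBelow.choose_spec.isClopen.isClosed

end P2

/-- The family `𝒫` generated by the sets `↑a` (for `a ∈ T₂`) under finite
unions and complements is closed under `A ↦ ↓A`, and `(L₂, ≤, 𝒫)` is a descriptive S4-frame:
`𝒫` separates points, every subfamily of `𝒫` with the finite intersection property has a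
nonempty intersection, and whenever `a ≰ b` there is `A ∈ 𝒫` with `b ∈ A` and `a ∉ ↓A`. -/
theorem statement8 :
    (∀ A : Set L2, P2 A → P2 {b : L2 | ∃ c ∈ A, b ≤ c}) ∧
    (∀ x y : L2, x ≠ y → ∃ A : Set L2, P2 A ∧ x ∈ A ∧ y ∉ A) ∧
    (∀ F : Set (Set L2), (∀ A ∈ F, P2 A) →
      (∀ G ⊆ F, G.Finite → (⋂₀ G).Nonempty) → (⋂₀ F).Nonempty) ∧
    (∀ a b : L2, ¬ a ≤ b →
      ∃ A : Set L2, P2 A ∧ b ∈ A ∧ a ∉ {x : L2 | ∃ c ∈ A, x ≤ c}) := by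
  refine ⟨fun A hA => ?_, fun x y hxy => ?_, fun F hF hfip => ?_, fun a b hab => ?_⟩
  · obtain ⟨N, hN⟩ := hA.exists_determinedBelow
    exact P2.of_determinedBelow hN.lowerClosure
  · obtain ⟨n, hn⟩ : ∃ n, x.toFun n ≠ y.toFun n := by
      by_contra! h
      exact hxy (Lgen.ext h)
    exact ⟨{c | c.toFun n = x.toFun n}, P2.setOf_toFun_eq n _, rfl, Ne.symm hn⟩
  · exact CompactSpace.nonempty_sInter (fun A hA => (hF A hA).isClosed) hfip
  · obtain ⟨n, s, has, hbs⟩ : ∃ n s, a.toFun n = some s ∧ b.toFun n ≠ some s := by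
      simpa only [Lgen.le_def, not_forall, exists_prop] using hab
    refine ⟨{c | c.toFun n = some s}ᶜ, (P2.setOf_toFun_eq n _).compl, hbs, ?_⟩
    rintro ⟨c, hc, hac⟩
    exact hc (hac n s has)
end

section
/- Let I ⊆ ℝ be a nontrivial interval (an order-connected set containing at least two points) and let σ be a nonempty countable set. Then the σ-fork F_σ, equipped with its Alexandroff topology, is an interior image of I: there exists a surjective continuous open map from the subspace I onto F_σ. -/
open Set

/-- The underlying set `{r, m} ⊔ σ` of the `σ`-fork: `none` is the root `r`, `some none` is the
maximal point `m`, and `some (some s)` is the point `s` of the cluster `σ`. -/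
def Fork (σ : Type*) : Type _ := Option (Option σ)

/-- The relation of the `σ`-fork: the root sees everything, `m` sees only itself, and the
points of the cluster `σ` see exactly one another. -/
def forkRel (σ : Type*) : Fork σ → Fork σ → Prop := fun p q =>
  match p, q with
  | none, _ => True
  | some none, some none => True
  | some (some _), some (some _) => True
  | _, _ => False


/-!
Choose `a < c < b` in `I` and a map `g : ℝ → σ` all of whose fibres are dense: the cosets
`ℚ + n √2` are pairwise disjoint and dense, and the `n`-th one is sent to the `n`-th point of `σ`.
Send `x < c` to the cluster point `g x`, `c` to the root and `x > c` to `m`. The preimages of the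
minimal open sets `↑r`, `↑m`, `↑s` are `I`, `I ∩ (c, ∞)` and `I ∩ (-∞, c)`, so the map is
continuous. It is open because every point of `I` lies in the closure of the fibre of each point
it sees: left of `c` by density of the fibres of `g`, and at `c` since `c` is approached from both
sides inside `I`.
-/

open Function

section Alexandroff

variable {X W : Type*} [TopologicalSpace X] {R : W → W → Prop} {f : X → W}

theorem continuous_alexandroff_of_isOpen_preimage (hR : ∀ p, R p p)
    (hf : ∀ p, IsOpen (f ⁻¹' {q | R p q})) : @Continuous X W _ (alexandroff R) f := by
  refine continuous_def.2 fun U hU => ?_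
  have hU_eq : f ⁻¹' U = ⋃ p ∈ U, f ⁻¹' {q | R p q} := by
    ext x
    simp only [mem_preimage, mem_iUnion, exists_prop]
    exact ⟨fun hx => ⟨f x, hx, hR _⟩, fun ⟨p, hp, hpx⟩ => hU p hp _ hpx⟩
  rw [hU_eq]
  exact isOpen_biUnion fun p _ => hf p

theorem isOpenMap_alexandroff_of_mem_closure
    (hf : ∀ x q, R (f x) q → x ∈ closure (f ⁻¹' {q})) :
    @IsOpenMap X W _ (alexandroff R) f := by
  rintro V hV - ⟨x, hxV, rfl⟩ q hq
  obtain ⟨y, hyV, hy⟩ := mem_closure_iff.1 (hf x q hq) V hV hxV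
  exact ⟨y, hyV, hy⟩

end Alexandroff

theorem Icc_subset_closure_Ioo_inter {α : Type*} [LinearOrder α] [TopologicalSpace α]
    [OrderTopology α] [DenselyOrdered α] {s : Set α} (hs : Dense s) {a b : α} (hab : a < b) :
    Icc a b ⊆ closure (Ioo a b ∩ s) :=
  calc Icc a b = closure (Ioo a b) := (closure_Ioo hab.ne).symm
    _ ⊆ closure (Ioo a b ∩ s) := closure_minimal (hs.open_subset_closure_inter isOpen_Ioo)
        isClosed_closure

theorem Real.exists_dense_fibers (σ : Type*) [Countable σ] [Nonempty σ] :
    ∃ g : ℝ → σ, ∀ t, Dense (g ⁻¹' {t}) := by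
  obtain ⟨e, he⟩ := exists_surjective_nat σ
  set φ : ℕ × ℚ → ℝ := fun p => p.2 + p.1 * √2 with hφ_def
  have hφ : Injective φ := by
    rintro ⟨n, q⟩ ⟨n', q'⟩ h
    simp only [hφ_def] at h
    obtain rfl : n = n' := by
      by_contra hne
      have hrat : ((n - n' : ℤ) : ℝ) * √2 = ((q' - q : ℚ) : ℝ) := by push_cast; linarith
      exact (irrational_sqrt_two.intCast_mul (sub_ne_zero.2 (by exact_mod_cast hne))).ne_rat _ hrat
    simpa using h
  refine ⟨e ∘ Prod.fst ∘ invFun φ, fun t => ?_⟩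
  obtain ⟨n, rfl⟩ := he t
  have hdense : Dense (range fun q : ℚ => φ (n, q)) :=
    (Homeomorph.addRight ((n : ℝ) * √2)).surjective.denseRange.comp Rat.denseRange_cast
      (continuous_add_const _)
  refine hdense.mono ?_
  rintro _ ⟨q, rfl⟩
  simp [leftInverse_invFun hφ (n, q)]

section ForkMap

variable {α σ : Type*} [LinearOrder α]

def forkMap (c : α) (g : α → σ) (x : α) : Fork σ :=
  if x < c then some (some (g x)) else if x = c then none else some none

variable {c x : α} {g : α → σ}

@[simp] theorem forkMap_of_lt (h : x < c) : forkMap c g x = some (some (g x)) := if_pos h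

@[simp] theorem forkMap_self : forkMap c g c = none :=
  (if_neg (lt_irrefl c)).trans (if_pos rfl)

@[simp] theorem forkMap_of_gt (h : c < x) : forkMap c g x = some none :=
  (if_neg h.not_gt).trans (if_neg h.ne')

theorem forkRel_refl : ∀ p : Fork σ, forkRel σ p p
  | none => trivial
  | some none => trivial
  | some (some _) => trivial

variable [TopologicalSpace α] [OrderTopology α]

theorem continuous_forkMap (c : α) (g : α → σ) :
    @Continuous α (Fork σ) _ (alexandroff (forkRel σ)) (forkMap c g) := by
  refine continuous_alexandroff_of_isOpen_preimage forkRel_refl ?_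
  rintro (_ | _ | s)
  · simp [forkRel]
  · convert isOpen_Ioi (a := c) using 1
    ext x
    rcases lt_trichotomy x c with hx | rfl | hx
    · simp [forkRel, hx, hx.not_gt]
    · simp [forkRel]
    · simp [forkRel, hx]
  · convert isOpen_Iio (a := c) using 1
    ext x
    rcases lt_trichotomy x c with hx | rfl | hx
    · simp [forkRel, hx]
    · simp [forkRel]
    · simp [forkRel, hx, hx.not_gt]

variable [DenselyOrdered α] {I : Set α} {a b : α}

theorem surjective_forkMap_comp_val (hI : I.OrdConnected) (ha : a ∈ I) (hb : b ∈ I)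
    (hac : a < c) (hcb : c < b) (hg : ∀ t, Dense (g ⁻¹' {t})) :
    Surjective (forkMap c g ∘ Subtype.val : I → Fork σ) := by
  have hcI : c ∈ I := hI.out ha hb ⟨hac.le, hcb.le⟩
  rintro (_ | _ | t)
  · exact ⟨⟨c, hcI⟩, forkMap_self⟩
  · exact ⟨⟨b, hb⟩, forkMap_of_gt hcb⟩
  · obtain ⟨y, hyt, hy⟩ := (hg t).exists_between hac
    exact ⟨⟨y, hI.out ha hcI (Ioo_subset_Icc_self hy)⟩,
      by rw [comp_apply, forkMap_of_lt hy.2, (hyt : g y = t)]⟩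

theorem isOpenMap_forkMap_comp_val (hI : I.OrdConnected) (ha : a ∈ I) (hb : b ∈ I)
    (hac : a < c) (hcb : c < b) (hg : ∀ t, Dense (g ⁻¹' {t})) :
    @IsOpenMap I (Fork σ) _ (alexandroff (forkRel σ)) (forkMap c g ∘ Subtype.val) := by
  have hcI : c ∈ I := hI.out ha hb ⟨hac.le, hcb.le⟩
  have cluster_mem_closure : ∀ lo ∈ I, lo < c → ∀ t,
      Icc lo c ⊆ closure (I ∩ forkMap c g ⁻¹' {some (some t)}) := by
    intro lo hlo hlc t
    refine (Icc_subset_closure_Ioo_inter (hg t) hlc).trans (closure_mono ?_)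
    rintro y ⟨hy, hyt⟩
    exact ⟨hI.out hlo hcI (Ioo_subset_Icc_self hy), by
      rw [mem_preimage, forkMap_of_lt hy.2, (hyt : g y = t)]; rfl⟩
  refine isOpenMap_alexandroff_of_mem_closure fun ⟨x, hx⟩ q hq => ?_
  rw [closure_subtype, preimage_comp, Subtype.image_preimage_coe]
  rcases lt_trichotomy x c with hxc | rfl | hxc
  · rcases q with _ | _ | t
    · simp [forkMap_of_lt hxc, forkRel] at hq
    · simp [forkMap_of_lt hxc, forkRel] at hq
    · exact cluster_mem_closure x hx hxc t (left_mem_Icc.2 hxc.le)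
  · rcases q with _ | _ | t
    · exact subset_closure ⟨hx, forkMap_self⟩
    · refine closure_mono (fun y hy => ?_) ((closure_Ioo hcb.ne).superset (left_mem_Icc.2 hcb.le))
      exact ⟨hI.out hcI hb (Ioo_subset_Icc_self hy), forkMap_of_gt hy.1⟩
    · exact cluster_mem_closure a ha hac t (right_mem_Icc.2 hac.le)
  · rcases q with _ | _ | t
    · simp [forkMap_of_gt hxc, forkRel] at hq
    · exact subset_closure ⟨hx, forkMap_of_gt hxc⟩
    · simp [forkMap_of_gt hxc, forkRel] at hq

end ForkMap

/-- Let `I ⊆ ℝ` be a nontrivial interval (order-connected with at least two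
points) and let `σ` be a nonempty countable set. Then the `σ`-fork, equipped with its
Alexandroff topology, is an interior image of `I`: there is a surjective continuous open map
from the subspace `I` onto `F_σ`. -/
theorem statement15 (I : Set ℝ) (hI : I.OrdConnected)
    (h2 : ∃ x ∈ I, ∃ y ∈ I, x ≠ y)
    (σ : Type*) [Countable σ] [Nonempty σ] :
    ∃ f : I → Fork σ, Function.Surjective f ∧
      @Continuous I (Fork σ) _ (alexandroff (forkRel σ)) f ∧
      @IsOpenMap I (Fork σ) _ (alexandroff (forkRel σ)) f := by
  obtain ⟨a, ha, b, hb, hab⟩ : ∃ a ∈ I, ∃ b ∈ I, a < b := by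
    obtain ⟨x, hx, y, hy, hxy⟩ := h2
    rcases hxy.lt_or_gt with h | h
    exacts [⟨x, hx, y, hy, h⟩, ⟨y, hy, x, hx, h⟩]
  obtain ⟨c, hac, hcb⟩ := exists_between hab
  obtain ⟨g, hg⟩ := Real.exists_dense_fibers σ
  let : TopologicalSpace (Fork σ) := alexandroff (forkRel σ)
  exact ⟨forkMap c g ∘ Subtype.val, surjective_forkMap_comp_val hI ha hb hac hcb hg,
    (continuous_forkMap c g).comp continuous_subtype_val,
    isOpenMap_forkMap_comp_val hI ha hb hac hcb hg⟩
end

section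
/- Let σ and τ be nonempty countable sets and let G be the S4-frame on the set {r₁, r₂, m} ⊔ σ ⊔ τ with the reflexive transitive relation R given by: r₁ R m, r₁ R s and s R s' for all s, s' ∈ σ; r₂ R m, r₂ R t and t R t' for all t, t' ∈ τ; every point is related to itself; and there are no other relations. Let I ⊆ ℝ be a nontrivial interval and let y < z be two points of I neither of which is an endpoint of I. Then there exists a surjective interior map f from the subspace I onto G with its Alexandroff topology such that f(x) ∈ σ for all x ∈ I with x < y and f(x) ∈ τ for all x ∈ I with x > z. -/
open Set

open Classical in
noncomputable def pick {σ : Type*} (e : ℕ → σ) : ℝ → σ := fun x =>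
  if h : ∃ q : ℚ, (q : ℝ) = x then e (Nat.unpair (padicValNat 2 h.choose.den)).1 else e 0

lemma pick_dense {σ : Type*} (e : ℕ → σ) {a b : ℝ} (hab : a < b) (i : ℕ) :
    ∃ x : ℝ, a < x ∧ x < b ∧ pick e x = e i := by
  obtain ⟨j, hj⟩ := pow_unbounded_of_one_lt (2 / (b - a)) (one_lt_two (α := ℝ))
  set k := Nat.pair i j with hk
  have hjk : j ≤ k := Nat.right_le_pair i j
  have h2k : 2 / (b - a) < 2 ^ k := hj.trans_le (pow_le_pow_right₀ one_le_two hjk)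
  have hba : 0 < b - a := sub_pos.2 hab
  have hc : (0 : ℝ) < 2 ^ k := by positivity
  have h2 : a * 2 ^ k + 2 < b * 2 ^ k := by
    have h3 : 2 < 2 ^ k * (b - a) := (div_lt_iff₀ hba).mp h2k
    nlinarith
  set n : ℤ := ⌊a * 2 ^ k⌋ + 1 with hn
  have hn1 : a * 2 ^ k < (n : ℝ) := by rw [hn]; push_cast; exact Int.lt_floor_add_one _
  have hn2 : ((n : ℝ)) + 1 ≤ a * 2 ^ k + 2 := by
    have := Int.floor_le (a * 2 ^ k)
    rw [hn]; push_cast; linarith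
  obtain ⟨p, hpodd, hp1, hp2⟩ : ∃ p : ℤ, Odd p ∧ a * 2 ^ k < (p : ℝ) ∧ (p : ℝ) < b * 2 ^ k := by
    rcases Int.even_or_odd n with hev | hod
    · exact ⟨n + 1, hev.add_one, by push_cast; linarith, by push_cast; linarith⟩
    · exact ⟨n, hod, hn1, by linarith⟩
  have hcop : p.natAbs.Coprime (2 ^ k) := by
    apply Nat.Coprime.pow_right
    exact Nat.coprime_two_right.mpr (Int.natAbs_odd.mpr hpodd)
  have hdnz : (2 ^ k : ℕ) ≠ 0 := by positivity
  set q : ℚ := ⟨p, 2 ^ k, hdnz, hcop⟩ with hq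
  have hqden : (q.den : ℝ) = 2 ^ k := by rw [hq]; push_cast; ring
  have hqnum : q.num = p := rfl
  have hcast : (q : ℝ) = (p : ℝ) / 2 ^ k := by
    rw [Rat.cast_def, hqnum, hqden]
  refine ⟨(q : ℝ), ?_, ?_, ?_⟩
  · rw [hcast, lt_div_iff₀ hc]; linarith
  · rw [hcast, div_lt_iff₀ hc]; linarith
  · classical
    unfold pick
    have hex : ∃ q' : ℚ, (q' : ℝ) = (q : ℝ) := ⟨q, rfl⟩
    rw [dif_pos hex]
    have hch : hex.choose = q := Rat.cast_injective hex.choose_spec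
    rw [hch]
    have hd : q.den = 2 ^ k := rfl
    rw [hd, padicValNat.prime_pow, hk, Nat.unpair_pair]



open Set

/-- The underlying set `{r₁, r₂, m} ⊔ σ ⊔ τ` of the frame obtained by gluing the `σ`-fork and
the `τ`-fork along their maximal points. -/
inductive GPoint (σ τ : Type*) where
  | r1 : GPoint σ τ
  | r2 : GPoint σ τ
  | m : GPoint σ τ
  | s : σ → GPoint σ τ
  | t : τ → GPoint σ τ

/-- The relation of the glued two-fork frame: `r₁ R m`, `r₁ R s` and `s R s'` for `s, s' ∈ σ`;
`r₂ R m`, `r₂ R t` and `t R t'` for `t, t' ∈ τ`; every point is related to itself; and there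
are no other relations. -/
def GRel {σ τ : Type*} : GPoint σ τ → GPoint σ τ → Prop := fun p q =>
  match p, q with
  | .r1, .r1 => True
  | .r1, .m => True
  | .r1, .s _ => True
  | .r2, .r2 => True
  | .r2, .m => True
  | .r2, .t _ => True
  | .m, .m => True
  | .s _, .s _ => True
  | .t _, .t _ => True
  | _, _ => False

/-- Let `σ, τ` be nonempty countable sets and `G` the S4-frame obtained by
gluing the `σ`-fork and the `τ`-fork along their maximal points. Let `I ⊆ ℝ` be a nontrivial
interval and `y < z` two non-endpoints of `I`. Then there is a surjective interior map `f`
from the subspace `I` onto `G` with its Alexandroff topology such that `f x ∈ σ` for `x < y`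
and `f x ∈ τ` for `x > z`. -/
theorem statement16 (σ τ : Type*) [Countable σ] [Nonempty σ] [Countable τ] [Nonempty τ]
    (I : Set ℝ) (hI : I.OrdConnected) (y z : ℝ) (hy : y ∈ I) (hz : z ∈ I) (hyz : y < z)
    (hy' : ∃ x ∈ I, x < y) (hz' : ∃ w ∈ I, z < w) :
    ∃ f : I → GPoint σ τ, Function.Surjective f ∧
      @Continuous I (GPoint σ τ) _ (alexandroff GRel) f ∧
      @IsOpenMap I (GPoint σ τ) _ (alexandroff GRel) f ∧
      (∀ x : I, (x : ℝ) < y → ∃ s : σ, f x = GPoint.s s) ∧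
      (∀ x : I, z < (x : ℝ) → ∃ t : τ, f x = GPoint.t t) := by
  classical
  obtain ⟨e, he⟩ := exists_surjective_nat σ
  obtain ⟨d, hd⟩ := exists_surjective_nat τ
  obtain ⟨a₀, ha₀I, ha₀⟩ := hy'
  obtain ⟨b₀, hb₀I, hb₀⟩ := hz'
  set F : ℝ → GPoint σ τ := fun x =>
    if x < y then .s (pick e x)
    else if x = y then .r1
    else if x < z then .m
    else if x = z then .r2
    else .t (pick d x) with hF
  have Flt : ∀ x : ℝ, x < y → F x = .s (pick e x) := fun x hx => if_pos hx
  have Fy : F y = .r1 := by simp [hF]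
  have Fmid : ∀ x : ℝ, y < x → x < z → F x = .m := by
    intro x h1 h2
    simp [hF, not_lt.2 h1.le, h1.ne', h2]
  have Fz : F z = .r2 := by
    simp [hF, not_lt.2 hyz.le, hyz.ne', lt_irrefl]
  have Fgt : ∀ x : ℝ, z < x → F x = .t (pick d x) := by
    intro x h1
    have h2 : y < x := hyz.trans h1
    simp [hF, not_lt.2 h2.le, h2.ne', not_lt.2 h1.le, h1.ne']
  refine ⟨fun x => F x, ?_, ?_, ?_, ?_, ?_⟩
  · -- surjectivity
    intro p
    cases p with
    | r1 => exact ⟨⟨y, hy⟩, Fy⟩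
    | r2 => exact ⟨⟨z, hz⟩, Fz⟩
    | m =>
      refine ⟨⟨(y + z) / 2, hI.out hy hz ⟨by linarith, by linarith⟩⟩, ?_⟩
      exact Fmid _ (by linarith) (by linarith)
    | s a =>
      obtain ⟨i, hi⟩ := he a
      obtain ⟨w, hw1, hw2, hw3⟩ := pick_dense e ha₀ i
      refine ⟨⟨w, hI.out ha₀I hy ⟨hw1.le, hw2.le⟩⟩, ?_⟩
      show F w = _
      rw [Flt w hw2, hw3, hi]
    | t a =>
      obtain ⟨i, hi⟩ := hd a
      obtain ⟨w, hw1, hw2, hw3⟩ := pick_dense d hb₀ i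
      refine ⟨⟨w, hI.out hz hb₀I ⟨hw1.le, hw2.le⟩⟩, ?_⟩
      show F w = _
      rw [Fgt w hw1, hw3, hi]
  · -- continuity
    rw [continuous_def]
    intro U hU
    replace hU : ∀ p ∈ U, ∀ q, GRel p q → q ∈ U := hU
    rw [Metric.isOpen_iff]
    rintro ⟨x, hxI⟩ hxU
    simp only [mem_preimage] at hxU ⊢
    rcases lt_trichotomy x y with h | h | h
    · refine ⟨y - x, by linarith, ?_⟩
      rintro ⟨x', hx'I⟩ hball
      rw [Metric.mem_ball, Subtype.dist_eq, Real.dist_eq, abs_lt] at hball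
      have hx' : x' < y := by linarith [hball.2]
      show F x' ∈ U
      rw [Flt x' hx']
      rw [Flt x h] at hxU
      exact hU _ hxU _ trivial
    · subst h
      rw [Fy] at hxU
      refine ⟨z - x, by linarith, ?_⟩
      rintro ⟨x', hx'I⟩ hball
      rw [Metric.mem_ball, Subtype.dist_eq, Real.dist_eq, abs_lt] at hball
      have hx'z : x' < z := by linarith [hball.2]
      show F x' ∈ U
      rcases lt_trichotomy x' x with h' | h' | h'
      · rw [Flt x' h']; exact hU _ hxU _ trivial
      · subst h'; rw [Fy]; exact hxU
      · rw [Fmid x' h' hx'z]; exact hU _ hxU _ trivial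
    · rcases lt_trichotomy x z with h2 | h2 | h2
      · rw [Fmid x h h2] at hxU
        refine ⟨min (x - y) (z - x), lt_min (by linarith) (by linarith), ?_⟩
        rintro ⟨x', hx'I⟩ hball
        rw [Metric.mem_ball, Subtype.dist_eq, Real.dist_eq, abs_lt] at hball
        have m1 : (x - y) ⊓ (z - x) ≤ x - y := min_le_left _ _
        have m2 : (x - y) ⊓ (z - x) ≤ z - x := min_le_right _ _
        show F x' ∈ U
        rw [Fmid x' (by linarith [hball.1]) (by linarith [hball.2])]
        exact hxU
      · subst h2
        rw [Fz] at hxU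
        refine ⟨x - y, by linarith, ?_⟩
        rintro ⟨x', hx'I⟩ hball
        rw [Metric.mem_ball, Subtype.dist_eq, Real.dist_eq, abs_lt] at hball
        have hx'y : y < x' := by linarith [hball.1]
        show F x' ∈ U
        rcases lt_trichotomy x' x with h' | h' | h'
        · rw [Fmid x' hx'y h']; exact hU _ hxU _ trivial
        · subst h'; rw [Fz]; exact hxU
        · rw [Fgt x' h']; exact hU _ hxU _ trivial
      · rw [Fgt x h2] at hxU
        refine ⟨x - z, by linarith, ?_⟩
        rintro ⟨x', hx'I⟩ hball
        rw [Metric.mem_ball, Subtype.dist_eq, Real.dist_eq, abs_lt] at hball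
        have hx' : z < x' := by linarith [hball.1]
        show F x' ∈ U
        rw [Fgt x' hx']
        exact hU _ hxU _ trivial
  · -- open map
    intro V hV
    show ∀ p ∈ (fun x : I => F ↑x) '' V, ∀ q, GRel p q → q ∈ (fun x : I => F ↑x) '' V
    rintro p ⟨⟨x, hxI⟩, hxV, rfl⟩ q hq
    obtain ⟨ε, hε, hball⟩ := Metric.isOpen_iff.mp hV _ hxV
    have hmem : ∀ w (hw : w ∈ I), |w - x| < ε → (⟨w, hw⟩ : I) ∈ V := by
      intro w hw h
      exact hball (by rw [Metric.mem_ball, Subtype.dist_eq, Real.dist_eq]; exact h)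
    simp only at hq
    rcases lt_trichotomy x y with h | h | h
    · rw [Flt x h] at hq
      cases q with
      | s b =>
        obtain ⟨i, hi⟩ := he b
        obtain ⟨w, hw1, hw2, hw3⟩ := pick_dense e (lt_min (by linarith : x < x + ε) h) i
        have hwy : w < y := hw2.trans_le (min_le_right _ _)
        have hwx : w < x + ε := hw2.trans_le (min_le_left _ _)
        have hwI : w ∈ I := hI.out hxI hy ⟨hw1.le, hwy.le⟩
        refine ⟨⟨w, hwI⟩, hmem w hwI (abs_lt.2 ⟨by linarith, by linarith⟩), ?_⟩
        show F w = _
        rw [Flt w hwy, hw3, hi]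
      | r1 => exact absurd hq (by simp [GRel])
      | r2 => exact absurd hq (by simp [GRel])
      | m => exact absurd hq (by simp [GRel])
      | t b => exact absurd hq (by simp [GRel])
    · subst h
      rw [Fy] at hq
      cases q with
      | r1 => exact ⟨⟨x, hxI⟩, hxV, Fy⟩
      | m =>
        set w := max (x + ε / 2) ((x + z) / 2) ⊓ ((x + min (x + ε) z) / 2) with hw
        -- simpler: choose w in (x, min (x+ε) z)
        have hlt : x < min (x + ε) z := lt_min (by linarith) hyz
        obtain ⟨w', hw1, hw2⟩ := exists_between hlt
        have hwz : w' < z := hw2.trans_le (min_le_right _ _)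
        have hwx : w' < x + ε := hw2.trans_le (min_le_left _ _)
        have hwI : w' ∈ I := hI.out hy hz ⟨hw1.le, hwz.le⟩
        refine ⟨⟨w', hwI⟩, hmem w' hwI (abs_lt.2 ⟨by linarith, by linarith⟩), ?_⟩
        show F w' = _
        rw [Fmid w' hw1 hwz]
      | s b =>
        obtain ⟨i, hi⟩ := he b
        have hlt : max (x - ε) a₀ < x := max_lt (by linarith) ha₀
        obtain ⟨w, hw1, hw2, hw3⟩ := pick_dense e hlt i
        have hwa : a₀ < w := lt_of_le_of_lt (le_max_right _ _) hw1
        have hwe : x - ε < w := lt_of_le_of_lt (le_max_left _ _) hw1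
        have hwI : w ∈ I := hI.out ha₀I hy ⟨hwa.le, hw2.le⟩
        refine ⟨⟨w, hwI⟩, hmem w hwI (abs_lt.2 ⟨by linarith, by linarith⟩), ?_⟩
        show F w = _
        rw [Flt w hw2, hw3, hi]
      | r2 => exact absurd hq (by simp [GRel])
      | t b => exact absurd hq (by simp [GRel])
    · rcases lt_trichotomy x z with h2 | h2 | h2
      · rw [Fmid x h h2] at hq
        cases q with
        | m => exact ⟨⟨x, hxI⟩, hxV, Fmid x h h2⟩
        | r1 => exact absurd hq (by simp [GRel])
        | r2 => exact absurd hq (by simp [GRel])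
        | s b => exact absurd hq (by simp [GRel])
        | t b => exact absurd hq (by simp [GRel])
      · subst h2
        rw [Fz] at hq
        cases q with
        | r2 => exact ⟨⟨x, hxI⟩, hxV, Fz⟩
        | m =>
          have hlt : max (x - ε) y < x := max_lt (by linarith) hyz
          obtain ⟨w, hw1, hw2⟩ := exists_between hlt
          have hwy : y < w := lt_of_le_of_lt (le_max_right _ _) hw1
          have hwe : x - ε < w := lt_of_le_of_lt (le_max_left _ _) hw1
          have hwI : w ∈ I := hI.out hy hz ⟨hwy.le, hw2.le⟩
          refine ⟨⟨w, hwI⟩, hmem w hwI (abs_lt.2 ⟨by linarith, by linarith⟩), ?_⟩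
          show F w = _
          rw [Fmid w hwy hw2]
        | t b =>
          obtain ⟨i, hi⟩ := hd b
          have hlt : x < min (x + ε) b₀ := lt_min (by linarith) hb₀
          obtain ⟨w, hw1, hw2, hw3⟩ := pick_dense d hlt i
          have hwb : w < b₀ := hw2.trans_le (min_le_right _ _)
          have hwe : w < x + ε := hw2.trans_le (min_le_left _ _)
          have hwI : w ∈ I := hI.out hz hb₀I ⟨hw1.le, hwb.le⟩
          refine ⟨⟨w, hwI⟩, hmem w hwI (abs_lt.2 ⟨by linarith, by linarith⟩), ?_⟩
          show F w = _
          rw [Fgt w hw1, hw3, hi]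
        | r1 => exact absurd hq (by simp [GRel])
        | s b => exact absurd hq (by simp [GRel])
      · rw [Fgt x h2] at hq
        cases q with
        | t b =>
          obtain ⟨i, hi⟩ := hd b
          have hlt : max (x - ε) z < x := max_lt (by linarith) h2
          obtain ⟨w, hw1, hw2, hw3⟩ := pick_dense d hlt i
          have hwz : z < w := lt_of_le_of_lt (le_max_right _ _) hw1
          have hwe : x - ε < w := lt_of_le_of_lt (le_max_left _ _) hw1
          have hwI : w ∈ I := hI.out hz hxI ⟨hwz.le, hw2.le⟩
          refine ⟨⟨w, hwI⟩, hmem w hwI (abs_lt.2 ⟨by linarith, by linarith⟩), ?_⟩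
          show F w = _
          rw [Fgt w hwz, hw3, hi]
        | r1 => exact absurd hq (by simp [GRel])
        | r2 => exact absurd hq (by simp [GRel])
        | m => exact absurd hq (by simp [GRel])
        | s b => exact absurd hq (by simp [GRel])
  · rintro ⟨x, hxI⟩ hx
    exact ⟨pick e x, Flt x hx⟩
  · rintro ⟨x, hxI⟩ hx
    exact ⟨pick d x, Fgt x hx⟩
end

section
/- Let (W, R, 𝒫) be a descriptive S4-frame such that: (i) the only members of 𝒫 that are simultaneously R-upsets and R-downsets are ∅ and W (connectedness); and (ii) for every A ∈ 𝒫, R⁻¹({w : R(w) ⊆ A}) ⊆ {w : R(w) ⊆ R⁻¹(A)} (validity of the S4.2 axiom ◇□p → □◇p). Then any two R-maximal points of W are R-related; that is, W has at most one maximal cluster. (Here a point w is R-maximal if w R v implies v R w, and R(w) = {v : w R v}.) -/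
/-!
By d-persistence of the S4.2 axiom, `R` is directed: two successors of a point have a common
successor. Hence for every admissible `A` with `R(x) ⊆ A` the set `R⁻¹(□A)` is an admissible
upset and downset containing `x`, so by connectedness it is all of `W`; in particular every point
sees every admissible superset of `R(x)`. Compactness and tightness turn "`y` sees every
admissible superset of `R(x)`" into a common successor of `x` and `y`, which for maximal `x` and
`y` forces `R x y`.
-/

open Set

theorem FiniteInter.sInter_mem_of_finite {α : Type*} {S G : Set (Set α)} (hS : FiniteInter S)
    (hG : G.Finite) (hGS : G ⊆ S) : ⋂₀ G ∈ S := by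
  simpa using hS.finiteInter_mem hG.toFinset (by simpa using hGS)

theorem FiniteInter.image2_inter {α : Type*} {S T : Set (Set α)} (hS : FiniteInter S)
    (hT : FiniteInter T) : FiniteInter (image2 (· ∩ ·) S T) where
  univ_mem := ⟨univ, hS.univ_mem, univ, hT.univ_mem, univ_inter univ⟩
  inter_mem := by
    rintro _ ⟨a, ha, b, hb, rfl⟩ _ ⟨c, hc, d, hd, rfl⟩
    exact ⟨a ∩ c, hS.inter_mem ha hc, b ∩ d, hT.inter_mem hb hd, inter_inter_inter_comm a c b d⟩

theorem FiniteInter.of_union_compl {α : Type*} {P : Set (Set α)} (huniv : univ ∈ P)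
    (hunion : ∀ A ∈ P, ∀ B ∈ P, A ∪ B ∈ P) (hcompl : ∀ A ∈ P, Aᶜ ∈ P) : FiniteInter P where
  univ_mem := huniv
  inter_mem A hA B hB := by
    simpa [compl_union] using hcompl _ (hunion _ (hcompl A hA) _ (hcompl B hB))

theorem FiniteInter.supersets {α : Type*} {P : Set (Set α)} (hP : FiniteInter P) (S : Set α) :
    FiniteInter {A ∈ P | S ⊆ A} where
  univ_mem := ⟨hP.univ_mem, subset_univ S⟩
  inter_mem _ hA _ hB := ⟨hP.inter_mem hA.1 hB.1, subset_inter hA.2 hB.2⟩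

theorem sInter_nonempty_of_finiteInter {α : Type*} {P F : Set (Set α)}
    (hcompact : ∀ F ⊆ P, (∀ G ⊆ F, G.Finite → (⋂₀ G).Nonempty) → (⋂₀ F).Nonempty)
    (hFP : F ⊆ P) (hF : FiniteInter F) (hne : ∀ A ∈ F, A.Nonempty) : (⋂₀ F).Nonempty :=
  hcompact F hFP fun _ hGF hG => hne _ (hF.sInter_mem_of_finite hG hGF)

namespace ModalFrame

variable {W : Type*} (R : W → W → Prop)

def dia (A : Set W) : Set W := {w | ∃ v ∈ A, R w v}

def box (A : Set W) : Set W := {w | ∀ v, R w v → v ∈ A}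

def IsUpset (U : Set W) : Prop := ∀ w ∈ U, ∀ v, R w v → v ∈ U

def IsDownset (D : Set W) : Prop := ∀ v ∈ D, ∀ w, R w v → w ∈ D

variable {R}

theorem compl_dia_compl (A : Set W) : (dia R Aᶜ)ᶜ = box R A := by
  ext w
  simp [dia, box, not_imp_comm]

theorem isUpset_box (htrans : ∀ u v w, R u v → R v w → R u w) (A : Set W) :
    IsUpset R (box R A) :=
  fun _ hw _ hv _ hu => hw _ (htrans _ _ _ hv hu)

theorem isDownset_dia (htrans : ∀ u v w, R u v → R v w → R u w) (A : Set W) :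
    IsDownset R (dia R A) :=
  fun _ ⟨u, huA, hvu⟩ _ hwv => ⟨u, huA, htrans _ _ _ hwv hvu⟩

theorem isUpset_dia (hdir : ∀ w v₁ v₂, R w v₁ → R w v₂ → Relation.Join R v₁ v₂)
    {U : Set W} (hU : IsUpset R U) : IsUpset R (dia R U) := by
  rintro w ⟨u, huU, hwu⟩ v hwv
  obtain ⟨t, hut, hvt⟩ := hdir w u v hwu hwv
  exact ⟨t, hU u huU t hut, hvt⟩

section Descriptive

variable {P : Set (Set W)}

theorem rel_of_forall_superset_mem (hcompl : ∀ A ∈ P, Aᶜ ∈ P)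
    (htight : ∀ w v : W, ¬ R w v → ∃ A ∈ P, v ∈ A ∧ w ∉ dia R A) {w u : W}
    (hu : ∀ A ∈ P, {v | R w v} ⊆ A → u ∈ A) : R w u := by
  by_contra h
  obtain ⟨A, hA, huA, hwA⟩ := htight w u h
  exact hu Aᶜ (hcompl A hA) (fun v hv hvA => hwA ⟨v, hvA, hv⟩) huA

theorem join_of_forall_superset_mem_dia (hP : FiniteInter P) (hcompl : ∀ A ∈ P, Aᶜ ∈ P)
    (hcompact : ∀ F ⊆ P, (∀ G ⊆ F, G.Finite → (⋂₀ G).Nonempty) → (⋂₀ F).Nonempty)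
    (htight : ∀ w v : W, ¬ R w v → ∃ A ∈ P, v ∈ A ∧ w ∉ dia R A) {w z : W}
    (hz : ∀ A ∈ P, {v | R w v} ⊆ A → z ∈ dia R A) : Relation.Join R w z := by
  obtain ⟨u, hu⟩ := sInter_nonempty_of_finiteInter hcompact
    (F := image2 (· ∩ ·) {A ∈ P | {v | R w v} ⊆ A} {B ∈ P | {v | R z v} ⊆ B})
    (by rintro _ ⟨A, hA, B, hB, rfl⟩; exact hP.inter_mem hA.1 hB.1)
    ((hP.supersets _).image2_inter (hP.supersets _))
    (by
      rintro _ ⟨A, hA, B, hB, rfl⟩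
      obtain ⟨v, hvA, hzv⟩ := hz A hA.1 hA.2
      exact ⟨v, hvA, hB.2 hzv⟩)
  refine ⟨u, rel_of_forall_superset_mem hcompl htight fun A hA hwA => ?_,
    rel_of_forall_superset_mem hcompl htight fun B hB hzB => ?_⟩
  · exact hu _ ⟨A, ⟨hA, hwA⟩, univ, ⟨hP.univ_mem, subset_univ _⟩, inter_univ A⟩
  · exact hu _ ⟨univ, ⟨hP.univ_mem, subset_univ _⟩, B, ⟨hB, hzB⟩, univ_inter B⟩

/-- d-persistence of the S4.2 axiom `◇□p → □◇p`: on a compact tight frame it forces directedness. -/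
theorem join_of_S42 (hP : FiniteInter P) (hcompl : ∀ A ∈ P, Aᶜ ∈ P)
    (hcompact : ∀ F ⊆ P, (∀ G ⊆ F, G.Finite → (⋂₀ G).Nonempty) → (⋂₀ F).Nonempty)
    (htight : ∀ w v : W, ¬ R w v → ∃ A ∈ P, v ∈ A ∧ w ∉ dia R A)
    (hS42 : ∀ A ∈ P, {w : W | ∃ v, R w v ∧ v ∈ box R A} ⊆ box R (dia R A))
    (w v₁ v₂ : W) (h₁ : R w v₁) (h₂ : R w v₂) : Relation.Join R v₁ v₂ :=
  join_of_forall_superset_mem_dia hP hcompl hcompact htight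
    fun A hA hv₁A => hS42 A hA ⟨v₁, h₁, hv₁A⟩ v₂ h₂

theorem dia_box_eq_univ (hrefl : ∀ w, R w w) (htrans : ∀ u v w, R u v → R v w → R u w)
    (hcompl : ∀ A ∈ P, Aᶜ ∈ P) (hRinv : ∀ A ∈ P, dia R A ∈ P)
    (hconn : ∀ A ∈ P, IsUpset R A → IsDownset R A → A = ∅ ∨ A = univ)
    (hdir : ∀ w v₁ v₂, R w v₁ → R w v₂ → Relation.Join R v₁ v₂)
    {A : Set W} (hA : A ∈ P) (hne : (box R A).Nonempty) : dia R (box R A) = univ := by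
  have hboxA : box R A ∈ P := compl_dia_compl A ▸ hcompl _ (hRinv _ (hcompl A hA))
  refine (hconn _ (hRinv _ hboxA) (isUpset_dia hdir (isUpset_box htrans A))
    (isDownset_dia htrans _)).resolve_left fun h => ?_
  obtain ⟨x, hx⟩ := hne
  have hxD : x ∈ dia R (box R A) := ⟨x, hx, hrefl x⟩
  simp [h] at hxD

end Descriptive

end ModalFrame

open ModalFrame in
theorem statement17_general {W : Type*} (R : W → W → Prop)
    (hrefl : ∀ w, R w w) (htrans : ∀ u v w, R u v → R v w → R u w)
    (P : Set (Set W))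
    (huniv : (univ : Set W) ∈ P)
    (hunion : ∀ A ∈ P, ∀ B ∈ P, A ∪ B ∈ P)
    (hcompl : ∀ A ∈ P, Aᶜ ∈ P)
    (hRinv : ∀ A ∈ P, {w : W | ∃ v ∈ A, R w v} ∈ P)
    (hcompact : ∀ F ⊆ P, (∀ G ⊆ F, G.Finite → (⋂₀ G).Nonempty) → (⋂₀ F).Nonempty)
    (htight : ∀ w v : W, ¬ R w v → ∃ A ∈ P, v ∈ A ∧ w ∉ {x : W | ∃ u ∈ A, R x u})
    (hconn : ∀ A ∈ P, (∀ w ∈ A, ∀ v, R w v → v ∈ A) →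
      (∀ v ∈ A, ∀ w, R w v → w ∈ A) → A = ∅ ∨ A = univ)
    (hS42 : ∀ A ∈ P, {w : W | ∃ v, R w v ∧ ∀ u, R v u → u ∈ A} ⊆
      {w : W | ∀ v, R w v → ∃ u ∈ A, R v u}) :
    ∀ x y : W, (∀ v, R x v → R v x) → (∀ v, R y v → R v y) → R x y := by
  intro x y hx hy
  have hP : FiniteInter P := .of_union_compl huniv hunion hcompl
  have hdir := join_of_S42 hP hcompl hcompact htight hS42
  have hy_sees : ∀ A ∈ P, {v | R x v} ⊆ A → y ∈ dia R A := by
    intro A hA hxA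
    obtain ⟨v, hvA, hyv⟩ : y ∈ dia R (box R A) :=
      (dia_box_eq_univ hrefl htrans hcompl hRinv hconn hdir hA ⟨x, hxA⟩).symm ▸ mem_univ y
    exact ⟨v, hvA v (hrefl v), hyv⟩
  obtain ⟨u, hxu, hyu⟩ := join_of_forall_superset_mem_dia hP hcompl hcompact htight hy_sees
  exact hy x (htrans y u x hyu (hx u hxu))

/-- Let `(W, R, 𝒫)` be a descriptive S4-frame such that (i) the only members
of `𝒫` that are simultaneously `R`-upsets and `R`-downsets are `∅` and `W` (connectedness),
and (ii) for every `A ∈ 𝒫`, `R⁻¹({w : R(w) ⊆ A}) ⊆ {w : R(w) ⊆ R⁻¹(A)}` (validity of the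
S4.2 axiom `◇□p → □◇p`). Then any two `R`-maximal points of `W` are `R`-related, i.e. `W` has
at most one maximal cluster. -/
theorem statement17 {W : Type*} (R : W → W → Prop)
    (hrefl : ∀ w, R w w) (htrans : ∀ u v w, R u v → R v w → R u w)
    (P : Set (Set W))
    (hempty : (∅ : Set W) ∈ P) (huniv : (univ : Set W) ∈ P)
    (hunion : ∀ A ∈ P, ∀ B ∈ P, A ∪ B ∈ P)
    (hcompl : ∀ A ∈ P, Aᶜ ∈ P)
    (hRinv : ∀ A ∈ P, {w : W | ∃ v ∈ A, R w v} ∈ P)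
    (hdiff : ∀ x y : W, x ≠ y → ∃ A ∈ P, x ∈ A ∧ y ∉ A)
    (hcompact : ∀ F ⊆ P, (∀ G ⊆ F, G.Finite → (⋂₀ G).Nonempty) → (⋂₀ F).Nonempty)
    (htight : ∀ w v : W, ¬ R w v → ∃ A ∈ P, v ∈ A ∧ w ∉ {x : W | ∃ u ∈ A, R x u})
    (hconn : ∀ A ∈ P, (∀ w ∈ A, ∀ v, R w v → v ∈ A) →
      (∀ v ∈ A, ∀ w, R w v → w ∈ A) → A = ∅ ∨ A = univ)
    (hS42 : ∀ A ∈ P, {w : W | ∃ v, R w v ∧ ∀ u, R v u → u ∈ A} ⊆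
      {w : W | ∀ v, R w v → ∃ u ∈ A, R v u}) :
    ∀ x y : W, (∀ v, R x v → R v x) → (∀ v, R y v → R v y) → R x y :=
  statement17_general R hrefl htrans P huniv hunion hcompl hRinv hcompact htight hconn hS42
end
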